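/- arXiv:2011.12777 — 12 statements merged into one kernel-verified Lean document; each statement's English description precedes it below -/
import Mathlib

section
/- Let T be an integral domain, L a field with T = L + M (internal direct sum as additive groups) where M is a maximal ideal of T, and K a subring of L with K ≠ L. Let R = K + M. If there exists a nonzero ideal A of T that is finitely generated as an R-module, then K is a field and L is a finite-dimensional K-vector space. -/
section Setup

variable {T : Type*} [CommRing T] [IsDomain T]

/-- The subring `K + M` of `T`, for a subring `K` and an ideal `M` of `T`. -/
def ringR (K : Subring T) (M : Ideal T) : Subring T where
  carrier := {t | ∃ k ∈ K, ∃ m ∈ M, t = k + m}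
  one_mem' := ⟨1, K.one_mem, 0, M.zero_mem, by ring⟩
  zero_mem' := ⟨0, K.zero_mem, 0, M.zero_mem, by ring⟩
  add_mem' := by
    rintro a b ⟨k1, hk1, m1, hm1, rfl⟩ ⟨k2, hk2, m2, hm2, rfl⟩
    exact ⟨k1 + k2, K.add_mem hk1 hk2, m1 + m2, M.add_mem hm1 hm2, by ring⟩
  neg_mem' := by
    rintro a ⟨k, hk, m, hm, rfl⟩
    exact ⟨-k, K.neg_mem hk, -m, M.neg_mem hm, by ring⟩
  mul_mem' := by
    rintro a b ⟨k1, hk1, m1, hm1, rfl⟩ ⟨k2, hk2, m2, hm2, rfl⟩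
    refine ⟨k1 * k2, K.mul_mem hk1 hk2, k1 * m2 + m1 * k2 + m1 * m2, ?_, by ring⟩
    exact M.add_mem (M.add_mem (M.mul_mem_left _ hm2) (M.mul_mem_right _ hm1))
      (M.mul_mem_left _ hm2)

theorem K_le_ringR (K : Subring T) (M : Ideal T) : K ≤ ringR K M :=
  fun k hk => ⟨k, hk, 0, M.zero_mem, (add_zero k).symm⟩

/-- An ideal `A` of `T`, viewed as a module over a subring `S` of `T`. -/
def idealAsMod (S : Subring T) (A : Ideal T) : Submodule ↥S T where
  carrier := A
  add_mem' := fun ha hb => A.add_mem ha hb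
  zero_mem' := A.zero_mem
  smul_mem' := fun r a ha => A.mul_mem_left (r : T) ha

/-- The subring `L` of `T` is a field. -/
def IsFieldSub (L : Subring T) : Prop := ∀ x ∈ L, x ≠ 0 → ∃ y ∈ L, x * y = 1

/-- `T = L ⊕ M` as additive groups: `L` is a retract of `T` with maximal ideal `M`. -/
def DirectSumDecomp (L : Subring T) (M : Ideal T) : Prop :=
  (∀ t : T, ∃ l ∈ L, ∃ m ∈ M, t = l + m) ∧ ∀ x ∈ L, x ∈ M → x = 0

/-- `L` is the field of fractions of `K` (inside `T`). -/
def IsFracOf (K L : Subring T) : Prop :=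
  ∀ l ∈ L, ∃ a ∈ K, ∃ b ∈ K, b ≠ 0 ∧ l * b = a

/-- The module structure on a subring over a smaller subring. -/
noncomputable def modOfLE {K L : Subring T} (h : K ≤ L) : Module ↥K ↥L :=
  ((Subring.inclusion h).toAlgebra).toModule

/-- `T` localized at the prime `M` is a valuation domain. -/
def ValAtPrime (M : Ideal T) (hp : M.IsPrime) : Prop :=
  @ValuationRing (@Localization.AtPrime T _ M hp) _
    (@IsLocalization.isDomain_of_local_atPrime T _ _ M hp)

/-- A Prüfer domain: every nonzero finitely generated ideal is invertible. -/
def IsPruferDomain (A : Type*) [CommRing A] [IsDomain A] : Prop :=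
  ∀ I : Ideal A, I ≠ ⊥ → I.FG →
    IsUnit (I : FractionalIdeal (nonZeroDivisors A) (FractionRing A))

/-- A GCD domain: any two nonzero elements admit a greatest common divisor. -/
def IsGCDDomain (A : Type*) [CommRing A] [IsDomain A] : Prop :=
  ∀ a b : A, a ≠ 0 → b ≠ 0 →
    ∃ g : A, g ∣ a ∧ g ∣ b ∧ ∀ c : A, c ∣ a → c ∣ b → c ∣ g

/-- The algebra structure of the fraction field of `T` over a subring of `T`. -/
noncomputable def algFrac (S : Subring T) : Algebra ↥S (FractionRing T) :=
  ((algebraMap T (FractionRing T)).comp S.subtype).toAlgebra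

end Setup

set_option maxHeartbeats 1000000 in
theorem stmt_0 {T : Type*} [CommRing T] [IsDomain T]
    (L : Subring T) (M : Ideal T) (K : Subring T)
    (hL : IsFieldSub L) (hM : M.IsMaximal) (hM0 : M ≠ ⊥)
    (hLM : DirectSumDecomp L M) (hKL : K ≤ L) (hKne : K ≠ L)
    (A : Ideal T) (hA : A ≠ ⊥) (hAfg : (idealAsMod (ringR K M) A).FG) :
    IsField ↥K ∧ @Module.Finite ↥K ↥L _ _ (modOfLE hKL) := by
  obtain ⟨a0, ha0A, ha0⟩ := Submodule.exists_mem_ne_zero_of_ne_bot hA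
  have hMR : ∀ m ∈ M, m ∈ ringR K M := fun m hm =>
    ⟨0, K.zero_mem, m, hm, (zero_add m).symm⟩
  -- Part 1 : K is a field
  have hKfield : IsField ↥K := by
    refine ⟨⟨0, 1, fun h => ?_⟩, mul_comm, ?_⟩
    · exact zero_ne_one (α := T) (congrArg Subtype.val h)
    · rintro ⟨k, hk⟩ hk0
      have hkT : k ≠ 0 := fun h => hk0 (Subtype.ext h)
      obtain ⟨l, hlL, hkl⟩ := hL k (hKL hk) hkT
      have hkR : k ∈ ringR K M := K_le_ringR K M hk
      set I : Ideal ↥(ringR K M) := Ideal.span {(⟨k, hkR⟩ : ↥(ringR K M))} with hI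
      have hle : idealAsMod (ringR K M) A ≤ I • idealAsMod (ringR K M) A := by
        intro x hx
        have hx' : l * x ∈ A := A.mul_mem_left l hx
        have hxx : (⟨k, hkR⟩ : ↥(ringR K M)) • (l * x) = x := by
          show k * (l * x) = x
          rw [← mul_assoc, hkl, one_mul]
        rw [← hxx]
        exact Submodule.smul_mem_smul (Ideal.subset_span rfl) hx'
      obtain ⟨r, hr1, hr0⟩ :=
        Submodule.exists_sub_one_mem_and_smul_eq_zero_of_fg_of_le_smul I _ hAfg hle
      have hra : (r : T) * a0 = 0 := hr0 a0 ha0A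
      have hrT : (r : T) = 0 := by
        rcases mul_eq_zero.mp hra with h | h
        · exact h
        · exact absurd h ha0
      obtain ⟨c, hc⟩ := Ideal.mem_span_singleton'.mp hr1
      have hcT : (c : T) * k = (r : T) - 1 := congrArg Subtype.val hc
      have hkc : k * (-(c : T)) = 1 := by
        rw [hrT] at hcT; ring_nf; ring_nf at hcT; linear_combination -hcT
      obtain ⟨k', hk', m', hm', hmc⟩ := (-c).2
      have hnegc : ((-c : ↥(ringR K M)) : T) = -(c : T) := rfl
      rw [hnegc] at hmc
      have hsum : k * (k' + m') = 1 := by rw [← hmc]; exact hkc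
      have hlk : l = k' + m' := by
        have : l * (k * (k' + m')) = l := by rw [hsum, mul_one]
        calc l = l * (k * (k' + m')) := this.symm
          _ = (k * l) * (k' + m') := by ring
          _ = k' + m' := by rw [hkl, one_mul]
      have hm'L : m' ∈ L := by
        have : m' = l - k' := by rw [hlk]; ring
        rw [this]; exact L.sub_mem hlL (hKL hk')
      have hm'0 : m' = 0 := hLM.2 m' hm'L hm'
      refine ⟨⟨k', hk'⟩, Subtype.ext ?_⟩
      show k * k' = 1
      rw [← hkl, hlk, hm'0, add_zero]
  refine ⟨hKfield, ?_⟩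
  -- Part 2 : M * A ≠ A
  have hMA : ∃ a ∈ A, a ∉ M * A := by
    by_contra h
    push_neg at h
    set MR : Ideal ↥(ringR K M) := M.comap (ringR K M).subtype with hMRdef
    have hle : idealAsMod (ringR K M) A ≤ MR • idealAsMod (ringR K M) A := by
      intro x hx
      have hx' : x ∈ M * A := h x hx
      refine Submodule.mul_induction_on hx' ?_ ?_
      · intro m hm n hn
        have : (⟨m, hMR m hm⟩ : ↥(ringR K M)) • n = m * n := rfl
        rw [← this]
        exact Submodule.smul_mem_smul hm hn
      · intro x y hx hy
        exact Submodule.add_mem _ hx hy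
    obtain ⟨r, hr1, hr0⟩ :=
      Submodule.exists_sub_one_mem_and_smul_eq_zero_of_fg_of_le_smul MR _ hAfg hle
    have hra : (r : T) * a0 = 0 := hr0 a0 ha0A
    have hrT : (r : T) = 0 := by
      rcases mul_eq_zero.mp hra with h' | h'
      · exact h'
      · exact absurd h' ha0
    have h1M : (1 : T) ∈ M := by
      have : (r : T) - 1 ∈ M := hr1
      rw [hrT, zero_sub] at this
      simpa using M.neg_mem this
    exact hM.ne_top ((Ideal.eq_top_iff_one M).mpr h1M)
  obtain ⟨a, haA, haB⟩ := hMA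
  letI : Module ↥K ↥L := modOfLE hKL
  -- the K-submodule M*A of T and the quotient
  set BK : Submodule ↥K T := idealAsMod K (M * A) with hBK
  -- the K-linear map l ↦ l * a from L to T
  have hcoe_smul : ∀ (k : ↥K) (x : ↥L), ((k • x : ↥L) : T) = (k : T) * (x : T) := by
    intro k x; rfl
  let g : ↥L →ₗ[↥K] T :=
    { toFun := fun l => (l : T) * a
      map_add' := by intro x y; push_cast; ring
      map_smul' := by
        intro k x
        show ((k • x : ↥L) : T) * a = k • ((x : T) * a)
        rw [hcoe_smul]
        show (k : T) * (x : T) * a = (k : T) * ((x : T) * a)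
        ring }
  let f : ↥L →ₗ[↥K] (T ⧸ BK) := BK.mkQ.comp g
  have hginj : ∀ l : ↥L, f l = 0 → l = 0 := by
    intro l hl
    by_contra hl0
    have hlT : (l : T) ≠ 0 := fun h => hl0 (Subtype.ext h)
    obtain ⟨l', hl'L, hll'⟩ := hL (l : T) l.2 hlT
    have hmem : (l : T) * a ∈ M * A := by
      have : (l : T) * a ∈ BK := (Submodule.Quotient.mk_eq_zero BK).mp hl
      exact this
    have : a ∈ M * A := by
      have h2 : l' * ((l : T) * a) ∈ M * A := (M * A).mul_mem_left l' hmem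
      have h3 : l' * ((l : T) * a) = a := by
        rw [← mul_assoc, mul_comm l' (l : T), hll', one_mul]
      rwa [h3] at h2
    exact haB this
  have hfinj : Function.Injective f := by
    rw [← LinearMap.ker_eq_bot]
    exact LinearMap.ker_eq_bot'.mpr hginj
  obtain ⟨s, hs⟩ := hAfg
  set N : Submodule ↥K (T ⧸ BK) := Submodule.span ↥K (BK.mkQ '' ↑s) with hN
  have key : ∀ x, x ∈ Submodule.span ↥(ringR K M) (↑s : Set T) → BK.mkQ x ∈ N := by
    intro x hx
    induction hx using Submodule.span_induction with
    | mem x hx => exact Submodule.subset_span ⟨x, hx, rfl⟩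
    | zero => simpa using N.zero_mem
    | add x y hx hy ihx ihy => rw [map_add]; exact N.add_mem ihx ihy
    | smul r x hx ih =>
      obtain ⟨kr, hkr, mr, hmr, hrsum⟩ := r.2
      have hxA : x ∈ A := by
        have h' := hx; rw [hs] at h'; exact h'
      have hsm : (r : ↥(ringR K M)) • x = kr * x + mr * x := by
        show (r : T) * x = kr * x + mr * x
        rw [hrsum]; ring
      rw [hsm, map_add]
      have h1 : BK.mkQ (kr * x) = (⟨kr, hkr⟩ : ↥K) • BK.mkQ x := by
        have : (⟨kr, hkr⟩ : ↥K) • x = kr * x := rfl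
        rw [← this, map_smul]
      have hmem : mr * x ∈ (M * A : Ideal T) := Submodule.mul_mem_mul hmr hxA
      have hmem' : mr * x ∈ BK := hmem
      have h2 : BK.mkQ (mr * x) = 0 := by
        rw [← Submodule.Quotient.mk_eq_zero BK] at hmem'
        exact hmem'
      rw [h1, h2, add_zero]
      exact N.smul_mem _ ih
  have hrange : ∀ l : ↥L, f l ∈ N := by
    intro l
    have hla : (l : T) * a ∈ A := A.mul_mem_left (l : T) haA
    have hla' : (l : T) * a ∈ Submodule.span ↥(ringR K M) (↑s : Set T) := by
      rw [hs]; exact hla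
    exact key _ hla'
  letI : Field ↥K := hKfield.toField
  haveI : IsNoetherian ↥K N := by
    have hfin : (BK.mkQ '' ↑s).Finite := (s.finite_toSet).image _
    exact isNoetherian_span_of_finite ↥K hfin
  let f' : ↥L →ₗ[↥K] N := f.codRestrict N hrange
  have hf'inj : Function.Injective f' := by
    intro x y hxy
    apply hfinj
    exact congrArg Subtype.val hxy
  haveI : IsNoetherian ↥K ↥L := isNoetherian_of_injective f' hf'inj
  infer_instance
end

section
/- With T = L + M, K ⊆ L, R = K + M as above, if R is a finite conductor domain (i.e., for all x, y in the fraction field of R, xR ∩ yR is a finitely generated R-module), then either (a) K is a field, [L:K] < ∞, and M is a finitely generated ideal of T, or (b) L is the fraction field of K and the localization T_M is a valuation domain. -/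
section Helpers

variable {T : Type*} [CommRing T] [IsDomain T]

/-- Membership of an ideal element in `ringR K M`. -/
theorem mem_ringR_of_mem {K : Subring T} {M : Ideal T} {m : T} (hm : m ∈ M) :
    m ∈ ringR K M :=
  ⟨0, K.zero_mem, m, hm, (zero_add m).symm⟩


theorem nak_unit (L : Subring T) (M : Ideal T) (K : Subring T)
    (hLM : DirectSumDecomp L M) (hKL : K ≤ L)
    {a₀ : T} (ha₀K : a₀ ∈ K)
    (N : Submodule ↥(ringR K M) T) (hFG : N.FG)
    {n₀ : T} (hn₀ : n₀ ∈ N) (hn₀0 : n₀ ≠ 0)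
    (hstab : ∀ n ∈ N, ∃ n', n' ∈ N ∧ n = a₀ * n') :
    ∃ k ∈ K, a₀ * k = 1 := by
  have hIN : N ≤ Ideal.span {(⟨a₀, K_le_ringR K M ha₀K⟩ : ↥(ringR K M))} • N := by
    intro n hn
    obtain ⟨n', hn', he⟩ := hstab n hn
    have : n = (⟨a₀, K_le_ringR K M ha₀K⟩ : ↥(ringR K M)) • n' := he
    rw [this]
    exact Submodule.smul_mem_smul (Ideal.mem_span_singleton_self _) hn'
  obtain ⟨r, hr1, hr0⟩ :=
    Submodule.exists_sub_one_mem_and_smul_eq_zero_of_fg_of_le_smul _ N hFG hIN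
  have hrn : (r : T) * n₀ = 0 := hr0 n₀ hn₀
  have hr : r = 0 := by
    have : (r : T) = 0 := by
      rcases mul_eq_zero.mp hrn with h | h
      · exact h
      · exact absurd h hn₀0
    exact Subtype.ext this
  rw [hr, zero_sub] at hr1
  obtain ⟨c, hc⟩ := Ideal.mem_span_singleton'.mp hr1
  obtain ⟨k, hk, m, hm, hck⟩ := c.2
  have hcT : (c : T) * a₀ = -1 := by
    have := congrArg (Subtype.val) hc
    simpa using this
  have key : k * a₀ + 1 = 0 := by
    apply hLM.2 _ (L.add_mem (L.mul_mem (hKL hk) (hKL ha₀K)) L.one_mem)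
    have h2 : k * a₀ + 1 = -(m * a₀) := by
      have h3 : (k + m) * a₀ = -1 := by rw [← hck]; exact hcT
      linear_combination h3
    rw [h2]
    exact M.neg_mem (M.mul_mem_right _ hm)
  exact ⟨-k, K.neg_mem hk, by linear_combination -key⟩

theorem span_pull (K : Subring T) (M : Ideal T)
    (G : Set T) (hGA : ∀ g ∈ G, g ∈ ringR K M)
    (s : Set (FractionRing ↥(ringR K M)))
    (hsG : ∀ z ∈ s, ∃ g, ∃ hg : g ∈ G,
      z = algebraMap ↥(ringR K M) (FractionRing ↥(ringR K M)) ⟨g, hGA g hg⟩)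
    {t : T} (ht : t ∈ ringR K M)
    (hspan : algebraMap ↥(ringR K M) (FractionRing ↥(ringR K M)) ⟨t, ht⟩ ∈
      Submodule.span ↥(ringR K M) s) :
    t ∈ Submodule.span ↥(ringR K M) G := by
  have einj : Function.Injective (algebraMap ↥(ringR K M) (FractionRing ↥(ringR K M))) :=
    IsFractionRing.injective ↥(ringR K M) (FractionRing ↥(ringR K M))
  have hA' : ∀ u ∈ Submodule.span ↥(ringR K M) G, u ∈ ringR K M := by
    intro u hu
    refine Submodule.span_induction (fun g hg => hGA g hg) (ringR K M).zero_mem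
      (fun u v _ _ hu hv => (ringR K M).add_mem hu hv) ?_ hu
    intro r u _ hu
    exact (ringR K M).mul_mem r.2 hu
  let P : Submodule ↥(ringR K M) (FractionRing ↥(ringR K M)) :=
    { carrier := {w | ∃ u, ∃ hu : u ∈ Submodule.span ↥(ringR K M) G,
        w = algebraMap ↥(ringR K M) (FractionRing ↥(ringR K M)) ⟨u, hA' u hu⟩}
      zero_mem' := ⟨0, Submodule.zero_mem _, by
        rw [show (⟨0, hA' 0 (Submodule.zero_mem _)⟩ : ↥(ringR K M)) = 0 from rfl,
          (algebraMap ↥(ringR K M) (FractionRing ↥(ringR K M))).map_zero]⟩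
      add_mem' := by
        rintro w₁ w₂ ⟨u₁, hu₁, rfl⟩ ⟨u₂, hu₂, rfl⟩
        refine ⟨u₁ + u₂, Submodule.add_mem _ hu₁ hu₂, ?_⟩
        rw [← (algebraMap ↥(ringR K M) (FractionRing ↥(ringR K M))).map_add]
        rfl
      smul_mem' := by
        rintro r w ⟨u, hu, rfl⟩
        refine ⟨(r : T) * u, ?_, ?_⟩
        · exact Submodule.smul_mem _ r hu
        · rw [Algebra.smul_def, ← (algebraMap ↥(ringR K M) (FractionRing ↥(ringR K M))).map_mul]
          rfl }
  have hsP : Submodule.span ↥(ringR K M) s ≤ P := by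
    rw [Submodule.span_le]
    rintro z hz
    obtain ⟨g, hg, rfl⟩ := hsG z hz
    exact ⟨g, Submodule.subset_span hg, rfl⟩
  obtain ⟨u, hu, heq⟩ := hsP hspan
  have : t = u := congrArg Subtype.val (einj heq)
  rw [this]
  exact hu


end Helpers

section Case1

variable {T : Type*} [CommRing T] [IsDomain T]

set_option maxHeartbeats 1000000 in
set_option synthInstance.maxHeartbeats 400000 in
theorem case_neg (L : Subring T) (M : Ideal T) (K : Subring T)
    (hL : IsFieldSub L) (hM : M.IsMaximal) (hM0 : M ≠ ⊥)
    (hLM : DirectSumDecomp L M) (hKL : K ≤ L)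
    (hfc : ∀ x y : FractionRing ↥(ringR K M),
      (Submodule.span ↥(ringR K M) {x} ⊓ Submodule.span ↥(ringR K M) {y}).FG)
    (hfrac : ¬ IsFracOf K L) :
    IsField ↥K ∧ @Module.Finite ↥K ↥L _ _ (modOfLE hKL) ∧ M.FG := by
  classical
  obtain ⟨m₀, hm₀M, hm₀⟩ := Submodule.exists_mem_ne_zero_of_ne_bot hM0
  -- the bad element l
  rw [IsFracOf] at hfrac
  push_neg at hfrac
  obtain ⟨l, hlL, hlprop⟩ := hfrac
  have hlprop' : ∀ b ∈ K, l * b ∈ K → b = 0 := by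
    intro b hb hlb
    by_contra hb0
    exact hlprop (l * b) hlb b hb hb0 rfl
  have hl0 : l ≠ 0 := by
    intro h
    have := hlprop' 1 K.one_mem (by rw [h, zero_mul]; exact K.zero_mem)
    exact one_ne_zero this
  obtain ⟨l', hl'L, hll'⟩ := hL l hlL hl0
  -- the fraction field element x = (l m₀) / m₀
  have einj : Function.Injective (algebraMap ↥(ringR K M) (FractionRing ↥(ringR K M))) :=
    IsFractionRing.injective ↥(ringR K M) (FractionRing ↥(ringR K M))
  have hlm₀M : l * m₀ ∈ M := M.mul_mem_left l hm₀M
  have hm₀e : algebraMap ↥(ringR K M) (FractionRing ↥(ringR K M)) ⟨m₀, mem_ringR_of_mem hm₀M⟩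
      ≠ 0 := by
    intro h
    rw [← (algebraMap ↥(ringR K M) (FractionRing ↥(ringR K M))).map_zero] at h
    exact hm₀ (congrArg Subtype.val (einj h))
  set e := algebraMap ↥(ringR K M) (FractionRing ↥(ringR K M)) with hedef
  set x : FractionRing ↥(ringR K M) :=
    e ⟨l * m₀, mem_ringR_of_mem hlm₀M⟩ / e ⟨m₀, mem_ringR_of_mem hm₀M⟩ with hxdef
  obtain ⟨s, hs⟩ := hfc 1 x
  -- every element of span{1} ⊓ span{x} is e of an element of M
  have key : ∀ z ∈ (Submodule.span ↥(ringR K M) {(1 : FractionRing ↥(ringR K M))} ⊓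
      Submodule.span ↥(ringR K M) {x}), ∃ μ, ∃ hμ : μ ∈ M, z = e ⟨μ, mem_ringR_of_mem hμ⟩ := by
    rintro z ⟨hz1, hzx⟩
    obtain ⟨r, hr⟩ := Submodule.mem_span_singleton.mp hz1
    obtain ⟨r', hr'⟩ := Submodule.mem_span_singleton.mp hzx
    have hze : z = e r := by rw [← hr, Algebra.smul_def, mul_one]
    have h2 : e (r * ⟨m₀, mem_ringR_of_mem hm₀M⟩) = e (r' * ⟨l * m₀, mem_ringR_of_mem hlm₀M⟩) := by
      rw [e.map_mul, e.map_mul, ← hze]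
      calc z * e ⟨m₀, mem_ringR_of_mem hm₀M⟩
          = (e r' * x) * e ⟨m₀, mem_ringR_of_mem hm₀M⟩ := by rw [← Algebra.smul_def, hr']
        _ = e r' * e ⟨l * m₀, mem_ringR_of_mem hlm₀M⟩ := by
            rw [hxdef, mul_assoc, div_mul_cancel₀ _ hm₀e]
    have h3 : (r : T) * m₀ = (r' : T) * (l * m₀) := congrArg Subtype.val (einj h2)
    have h4 : (r : T) = (r' : T) * l := by
      apply mul_right_cancel₀ hm₀
      rw [h3]; ring
    obtain ⟨k, hk, m, hm, hrk⟩ := r.2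
    obtain ⟨k', hk', m', hm', hr'k⟩ := r'.2
    have h5 : k - k' * l = m' * l - m := by
      have : k + m = (k' + m') * l := by rw [← hrk, ← hr'k]; exact h4
      linear_combination this
    have h6 : k - k' * l = 0 := by
      apply hLM.2 _ (L.sub_mem (hKL hk) (L.mul_mem (hKL hk') hlL))
      rw [h5]
      exact M.sub_mem (M.mul_mem_right _ hm') hm
    have hk'0 : k' = 0 := by
      apply hlprop' k' hk'
      have : l * k' = k := by linear_combination -h6
      rw [this]; exact hk
    have hk0 : k = 0 := by rw [hk'0] at h6; simpa using h6
    have hrm : (r : T) = m := by rw [hrk, hk0, zero_add]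
    refine ⟨(r : T), by rw [hrm]; exact hm, ?_⟩
    rw [hze]
  -- choose generators in M
  have key' : ∀ z ∈ s, ∃ μ, ∃ hμ : μ ∈ M, z = e ⟨μ, mem_ringR_of_mem hμ⟩ := by
    intro z hz
    exact key z (hs ▸ Submodule.subset_span hz)
  choose μ hμM hμe using key'
  let G : Finset T := s.attach.image fun z => μ z.1 z.2
  have hGM : ∀ g ∈ (G : Set T), g ∈ M := by
    intro g hg
    simp only [G, Finset.coe_image, Set.mem_image, Finset.mem_coe, Finset.mem_attach] at hg
    obtain ⟨z, _, rfl⟩ := hg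
    exact hμM z.1 z.2
  have hGA : ∀ g ∈ (G : Set T), g ∈ ringR K M := fun g hg => mem_ringR_of_mem (hGM g hg)
  -- M is contained in the span of G over ringR K M
  have hMspan : ∀ ⦃t : T⦄, t ∈ M → t ∈ Submodule.span ↥(ringR K M) (G : Set T) := by
    intro t ht
    apply span_pull K M (G : Set T) hGA (s : Set (FractionRing ↥(ringR K M)))
      ?_ (mem_ringR_of_mem ht) ?_
    · intro z hz
      refine ⟨μ z hz, Finset.mem_coe.mpr ?_, hμe z hz⟩
      exact Finset.mem_image.mpr ⟨⟨z, hz⟩, Finset.mem_attach _ _, rfl⟩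
    · rw [hs]
      constructor
      · apply Submodule.mem_span_singleton.mpr
        exact ⟨⟨t, mem_ringR_of_mem ht⟩, by rw [Algebra.smul_def, mul_one]⟩
      · apply Submodule.mem_span_singleton.mpr
        have hl'tM : l' * t ∈ M := M.mul_mem_left l' ht
        refine ⟨⟨l' * t, mem_ringR_of_mem hl'tM⟩, ?_⟩
        rw [Algebra.smul_def, hxdef, ← mul_div_assoc, ← e.map_mul]
        rw [show (⟨l' * t, mem_ringR_of_mem hl'tM⟩ * ⟨l * m₀, mem_ringR_of_mem hlm₀M⟩ :
          ↥(ringR K M)) = ⟨t, mem_ringR_of_mem ht⟩ * ⟨m₀, mem_ringR_of_mem hm₀M⟩ from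
          Subtype.ext (by show (l' * t) * (l * m₀) = t * m₀; rw [show (l' * t) * (l * m₀) = (l * l') * (t * m₀) by ring, hll', one_mul])]
        rw [e.map_mul, mul_div_cancel_right₀ _ hm₀e]
  -- M is finitely generated as a module over ringR K M
  have hGsub : Submodule.span ↥(ringR K M) (G : Set T) ≤ idealAsMod (ringR K M) M :=
    Submodule.span_le.mpr hGM
  have hNfg : (idealAsMod (ringR K M) M).FG := by
    refine ⟨G, le_antisymm hGsub ?_⟩
    intro t ht
    exact hMspan ht
  -- M is finitely generated as an ideal of T
  have hMFG : M.FG := by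
    refine ⟨G, le_antisymm ?_ ?_⟩
    · rw [Ideal.span_le]; exact hGM
    · intro t ht
      refine Submodule.span_induction (p := fun u _ => u ∈ Ideal.span (G : Set T))
        ?_ ?_ ?_ ?_ (hMspan ht)
      · intro g hg; exact Ideal.subset_span hg
      · exact Ideal.zero_mem _
      · intro u w _ _ hu hw; exact Ideal.add_mem _ hu hw
      · intro r u _ hu; exact Ideal.mul_mem_left _ _ hu
  -- K is a field
  have hKfield : IsField ↥K := by
    refine ⟨⟨0, 1, fun h => one_ne_zero (congrArg Subtype.val h).symm⟩, mul_comm, ?_⟩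
    intro a ha
    have haT : (a : T) ≠ 0 := fun h => ha (Subtype.ext h)
    obtain ⟨y, hyL, hay⟩ := hL a (hKL a.2) haT
    obtain ⟨k, hkK, hak⟩ := nak_unit L M K hLM hKL a.2 (idealAsMod (ringR K M) M) hNfg
      hm₀M hm₀ (fun n hn => ⟨y * n, M.mul_mem_left y hn, by rw [← mul_assoc, hay, one_mul]⟩)
    exact ⟨⟨k, hkK⟩, Subtype.ext hak⟩
  -- a witness v ∈ M \ M*M
  obtain ⟨v, hvM, hvMM⟩ : ∃ v ∈ M, v ∉ M * M := by
    by_contra hcon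
    push_neg at hcon
    have hle : M ≤ M • M := by rw [Ideal.smul_eq_mul]; intro w hw; exact hcon w hw
    obtain ⟨r, hr1, hr0⟩ :=
      Submodule.exists_sub_one_mem_and_smul_eq_zero_of_fg_of_le_smul M M hMFG hle
    have hr : r = 0 := by
      have := hr0 m₀ hm₀M
      rcases mul_eq_zero.mp this with h | h
      · exact h
      · exact absurd h hm₀
    rw [hr, zero_sub] at hr1
    exact hM.ne_top (Ideal.eq_top_iff_one M |>.mpr (by simpa using M.neg_mem hr1))
  -- L is a finite K-module
  letI instK : Field ↥K := hKfield.toField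
  letI instLmod : Module ↥K ↥L := modOfLE hKL
  have hLfin : @Module.Finite ↥K ↥L _ _ (modOfLE hKL) := by
    let N₂ : Submodule ↥K T := idealAsMod K (M * M)
    let f : ↥L →ₗ[↥K] (T ⧸ N₂) :=
      { toFun := fun l => Submodule.Quotient.mk ((l : T) * v)
        map_add' := by
          intro l₁ l₂
          show (Submodule.Quotient.mk (((l₁ + l₂ : ↥L) : T) * v) : T ⧸ N₂) =
            Submodule.Quotient.mk ((l₁ : T) * v) + Submodule.Quotient.mk ((l₂ : T) * v)
          have h1 : ((l₁ + l₂ : ↥L) : T) * v = (l₁ : T) * v + (l₂ : T) * v := by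
            push_cast; ring
          rw [h1, Submodule.Quotient.mk_add]
        map_smul' := by
          intro k l
          have h1 : ((k • l : ↥L) : T) = (k : T) * (l : T) := rfl
          show (Submodule.Quotient.mk (((k • l : ↥L) : T) * v) : T ⧸ N₂) =
            k • Submodule.Quotient.mk ((l : T) * v)
          rw [← Submodule.Quotient.mk_smul]
          congr 1
          show ((k • l : ↥L) : T) * v = (k : T) * ((l : T) * v)
          rw [h1]; ring }
    have hfinj : Function.Injective f := by
      have h0 : ∀ l : ↥L, f l = 0 → l = 0 := by
        intro l hl
        have hmem : (l : T) * v ∈ M * M := (Submodule.Quotient.mk_eq_zero N₂).mp hl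
        by_contra hne
        have hlT : (l : T) ≠ 0 := fun h => hne (Subtype.ext h)
        obtain ⟨y, hyL, hly⟩ := hL l l.2 hlT
        have hvmem : v ∈ M * M := by
          have := Ideal.mul_mem_left (M * M) y hmem
          rwa [← mul_assoc, mul_comm y (l : T), hly, one_mul] at this
        exact hvMM hvmem
      intro l₁ l₂ h
      have := h0 (l₁ - l₂) (by rw [map_sub, h, sub_self])
      exact sub_eq_zero.mp this
    let W : Submodule ↥K (T ⧸ N₂) :=
      Submodule.span ↥K (Submodule.Quotient.mk '' (G : Set T))
    have hspanW : ∀ t ∈ Submodule.span ↥(ringR K M) (G : Set T),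
        (Submodule.Quotient.mk t : T ⧸ N₂) ∈ W := by
      intro t ht
      refine Submodule.span_induction
        (p := fun u _ => (Submodule.Quotient.mk u : T ⧸ N₂) ∈ W) ?_ ?_ ?_ ?_ ht
      · intro g hg; exact Submodule.subset_span ⟨g, hg, rfl⟩
      · exact W.zero_mem
      · intro u w _ _ hu hw
        rw [Submodule.Quotient.mk_add]; exact W.add_mem hu hw
      · intro r u hu hmemW
        obtain ⟨k, hkK, m, hmM, hrk⟩ := r.2
        have husp : u ∈ M := hGsub hu
        have h1 : (r : T) * u = k * u + m * u := by rw [hrk]; ring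
        show (Submodule.Quotient.mk ((r : T) * u) : T ⧸ N₂) ∈ W
        rw [h1, Submodule.Quotient.mk_add]
        apply W.add_mem
        · have h2 : (Submodule.Quotient.mk (k * u) : T ⧸ N₂) =
              (⟨k, hkK⟩ : ↥K) • (Submodule.Quotient.mk u : T ⧸ N₂) := by
            rw [← Submodule.Quotient.mk_smul]
            rfl
          rw [h2]; exact W.smul_mem _ hmemW
        · have h3 : m * u ∈ M * M := Ideal.mul_mem_mul hmM husp
          rw [(Submodule.Quotient.mk_eq_zero N₂).mpr h3]
          exact W.zero_mem
    have hrange : ∀ l : ↥L, f l ∈ W :=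
      fun l => hspanW _ (hMspan (M.mul_mem_left _ hvM))
    have hWfg : W.FG := Submodule.fg_span ((G.finite_toSet).image _)
    letI : Module.Finite ↥K W := Module.Finite.iff_fg.mpr hWfg
    letI : IsNoetherian ↥K W := IsNoetherian.iff_fg.mpr inferInstance
    exact Module.Finite.of_injective (f.codRestrict W hrange)
      (fun a b hab => hfinj (congrArg Subtype.val hab))
  exact ⟨hKfield, hLfin, hMFG⟩

end Case1

section Case2

variable {T : Type*} [CommRing T] [IsDomain T]

set_option maxHeartbeats 1000000 in
set_option synthInstance.maxHeartbeats 400000 in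
theorem case_pos (L : Subring T) (M : Ideal T) (K : Subring T)
    (hL : IsFieldSub L) (hM : M.IsMaximal) (hM0 : M ≠ ⊥)
    (hLM : DirectSumDecomp L M) (hKL : K ≤ L) (hKne : K ≠ L)
    (hfc : ∀ x y : FractionRing ↥(ringR K M),
      (Submodule.span ↥(ringR K M) {x} ⊓ Submodule.span ↥(ringR K M) {y}).FG)
    (hfrac : IsFracOf K L) :
    ValAtPrime M hM.isPrime := by
  classical
  obtain ⟨m₀, hm₀M, hm₀⟩ := Submodule.exists_mem_ne_zero_of_ne_bot hM0
  -- K is not a field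
  obtain ⟨a₀, ha₀K, ha₀0, ha₀nu⟩ : ∃ a₀ ∈ K, a₀ ≠ 0 ∧ ∀ k ∈ K, a₀ * k ≠ 1 := by
    by_contra h
    push_neg at h
    apply hKne
    refine le_antisymm hKL ?_
    intro l hlL
    obtain ⟨a, haK, b, hbK, hb0, hlb⟩ := hfrac l hlL
    obtain ⟨c, hcK, hbc⟩ := h b hbK hb0
    have hl : l = a * c := by
      calc l = l * (b * c) := by rw [hbc, mul_one]
      _ = (l * b) * c := by ring
      _ = a * c := by rw [hlb]
    rw [hl]; exact K.mul_mem haK hcK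
  obtain ⟨y₀, hy₀L, ha₀y₀⟩ := hL a₀ (hKL ha₀K) ha₀0
  have einj : Function.Injective (algebraMap ↥(ringR K M) (FractionRing ↥(ringR K M))) :=
    IsFractionRing.injective ↥(ringR K M) (FractionRing ↥(ringR K M))
  set e := algebraMap ↥(ringR K M) (FractionRing ↥(ringR K M)) with hedef
  -- main comparability statement
  have comp : ∀ p q : T, ∃ s t : T, s ∉ M ∧ (s * p = t * q ∨ s * q = t * p) := by
    suffices h : ∀ p q : T, p ∈ M → q ∈ M → ∃ s t : T, s ∉ M ∧
        (s * p = t * q ∨ s * q = t * p) by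
      intro p q
      obtain ⟨s, t, hsM, hc⟩ := h (p * m₀) (q * m₀) (M.mul_mem_left p hm₀M)
        (M.mul_mem_left q hm₀M)
      refine ⟨s, t, hsM, ?_⟩
      rcases hc with hc | hc
      · left; apply mul_right_cancel₀ hm₀; linear_combination hc
      · right; apply mul_right_cancel₀ hm₀; linear_combination hc
    intro p q hpM hqM
    have h1M : (1 : T) ∉ M := fun h => hM.ne_top (Ideal.eq_top_iff_one M |>.mpr h)
    by_cases hp : p = 0
    · exact ⟨1, 0, h1M, Or.inl (by rw [hp, mul_zero, zero_mul])⟩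
    by_cases hq : q = 0
    · exact ⟨1, 0, h1M, Or.inr (by rw [hq, mul_zero, zero_mul])⟩
    by_contra hcon
    push_neg at hcon
    have hqp : ∀ u w : T, u * p = w * q → u ∈ M := by
      intro u w h
      by_contra hu; exact (hcon u w hu).1 h
    have hpq : ∀ u w : T, u * q = w * p → u ∈ M := by
      intro u w h
      by_contra hu; exact (hcon u w hu).2 h
    obtain ⟨s, hs⟩ := hfc (e ⟨p, mem_ringR_of_mem hpM⟩) (e ⟨q, mem_ringR_of_mem hqM⟩)
    -- generators of the conductor
    have key : ∀ z ∈ s, ∃ c, ∃ hc : c ∈ M,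
        z = e ⟨c, mem_ringR_of_mem hc⟩ ∧ c ∈ Ideal.span {p} ⊓ Ideal.span {q} := by
      intro z hz
      have hz' := hs ▸ Submodule.subset_span hz
      obtain ⟨hz1, hz2⟩ := hz'
      obtain ⟨r, hr⟩ := Submodule.mem_span_singleton.mp hz1
      obtain ⟨r', hr'⟩ := Submodule.mem_span_singleton.mp hz2
      have hze : z = e (r * ⟨p, mem_ringR_of_mem hpM⟩) := by
        rw [e.map_mul, ← Algebra.smul_def, hr]
      have hze' : z = e (r' * ⟨q, mem_ringR_of_mem hqM⟩) := by
        rw [e.map_mul, ← Algebra.smul_def, hr']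
      have heq : (r : T) * p = (r' : T) * q :=
        congrArg Subtype.val (einj (hze ▸ hze'))
      refine ⟨(r : T) * p, M.mul_mem_left _ hpM, ?_, ?_, ?_⟩
      · rw [hze]; rfl
      · exact Ideal.mem_span_singleton'.mpr ⟨(r : T), rfl⟩
      · exact Ideal.mem_span_singleton'.mpr ⟨(r' : T), heq.symm⟩
    choose c hcM hce hcI using key
    let G : Finset T := s.attach.image fun z => c z.1 z.2
    have hGM : ∀ g ∈ (G : Set T), g ∈ M := by
      intro g hg
      simp only [G, Finset.coe_image, Set.mem_image, Finset.mem_coe, Finset.mem_attach] at hg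
      obtain ⟨z, _, rfl⟩ := hg
      exact hcM z.1 z.2
    have hGA : ∀ g ∈ (G : Set T), g ∈ ringR K M := fun g hg => mem_ringR_of_mem (hGM g hg)
    have hGI : ∀ g ∈ (G : Set T), g ∈ Ideal.span {p} ⊓ Ideal.span {q} := by
      intro g hg
      simp only [G, Finset.coe_image, Set.mem_image, Finset.mem_coe, Finset.mem_attach] at hg
      obtain ⟨z, _, rfl⟩ := hg
      exact hcI z.1 z.2
    -- the conductor ideal is spanned by G over ringR K M
    have hIspan : ∀ w ∈ Ideal.span {p} ⊓ Ideal.span {q},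
        w ∈ Submodule.span ↥(ringR K M) (G : Set T) := by
      intro w hw
      obtain ⟨u, hu⟩ := Ideal.mem_span_singleton'.mp hw.1
      obtain ⟨u', hu'⟩ := Ideal.mem_span_singleton'.mp hw.2
      have huM : u ∈ M := hqp u u' (by rw [hu, hu'])
      have hu'M : u' ∈ M := hpq u' u (by rw [hu, hu'])
      have hwM : w ∈ M := by rw [← hu]; exact M.mul_mem_left u hpM
      apply span_pull K M (G : Set T) hGA (s : Set (FractionRing ↥(ringR K M)))
        ?_ (mem_ringR_of_mem hwM) ?_
      · intro z hz
        refine ⟨c z hz, Finset.mem_coe.mpr ?_, hce z hz⟩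
        exact Finset.mem_image.mpr ⟨⟨z, hz⟩, Finset.mem_attach _ _, rfl⟩
      · rw [hs]
        constructor
        · apply Submodule.mem_span_singleton.mpr
          refine ⟨⟨u, mem_ringR_of_mem huM⟩, ?_⟩
          rw [Algebra.smul_def, ← e.map_mul]
          congr 1
          exact Subtype.ext hu
        · apply Submodule.mem_span_singleton.mpr
          refine ⟨⟨u', mem_ringR_of_mem hu'M⟩, ?_⟩
          rw [Algebra.smul_def, ← e.map_mul]
          congr 1
          exact Subtype.ext hu'
    -- finite generation and Nakayama
    have hGsub : Submodule.span ↥(ringR K M) (G : Set T) ≤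
        idealAsMod (ringR K M) (Ideal.span {p} ⊓ Ideal.span {q}) :=
      Submodule.span_le.mpr (fun g hg => hGI g hg)
    have hNfg : (idealAsMod (ringR K M) (Ideal.span {p} ⊓ Ideal.span {q})).FG :=
      ⟨G, le_antisymm hGsub (fun w hw => hIspan w hw)⟩
    have hpqI : p * q ∈ Ideal.span {p} ⊓ Ideal.span {q} :=
      ⟨Ideal.mem_span_singleton'.mpr ⟨q, mul_comm q p⟩,
       Ideal.mem_span_singleton'.mpr ⟨p, rfl⟩⟩
    obtain ⟨k, hkK, hak⟩ := nak_unit L M K hLM hKL ha₀K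
      (idealAsMod (ringR K M) (Ideal.span {p} ⊓ Ideal.span {q})) hNfg
      hpqI (mul_ne_zero hp hq)
      (fun n hn => ⟨y₀ * n,
        ⟨Ideal.mul_mem_left _ y₀ hn.1, Ideal.mul_mem_left _ y₀ hn.2⟩,
        by rw [← mul_assoc, ha₀y₀, one_mul]⟩)
    exact ha₀nu k hkK hak
  -- deduce that the localization is a valuation ring
  show ValAtPrime M hM.isPrime
  unfold ValAtPrime
  refine @ValuationRing.mk _ _ _ ⟨?_⟩
  intro a b
  refine Localization.induction_on₂ a b ?_
  rintro ⟨r₁, d₁⟩ ⟨r₂, d₂⟩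
  obtain ⟨s, t, hsM, hc⟩ := comp r₁ r₂
  rcases hc with hc | hc
  · -- s * r₁ = t * r₂ : r₂ divides r₁
    refine ⟨Localization.mk (t * (d₂ : T)) (⟨s, hsM⟩ * d₁), Or.inr ?_⟩
    rw [Localization.mk_mul, Localization.mk_eq_mk_iff, Localization.r_iff_exists]
    refine ⟨1, ?_⟩
    simp only [OneMemClass.coe_one, one_mul, Submonoid.coe_mul]
    linear_combination (-((d₁ : T) * (d₂ : T))) * hc
  · -- s * r₂ = t * r₁ : r₁ divides r₂
    refine ⟨Localization.mk (t * (d₁ : T)) (⟨s, hsM⟩ * d₂), Or.inl ?_⟩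
    rw [Localization.mk_mul, Localization.mk_eq_mk_iff, Localization.r_iff_exists]
    refine ⟨1, ?_⟩
    simp only [OneMemClass.coe_one, one_mul, Submonoid.coe_mul]
    linear_combination (-((d₁ : T) * (d₂ : T))) * hc

end Case2


theorem stmt_1 {T : Type*} [CommRing T] [IsDomain T]
    (L : Subring T) (M : Ideal T) (K : Subring T)
    (hL : IsFieldSub L) (hM : M.IsMaximal) (hM0 : M ≠ ⊥)
    (hLM : DirectSumDecomp L M) (hKL : K ≤ L) (hKne : K ≠ L)
    (hfc : ∀ x y : FractionRing ↥(ringR K M),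
      (Submodule.span ↥(ringR K M) {x} ⊓ Submodule.span ↥(ringR K M) {y}).FG) :
    (IsField ↥K ∧ @Module.Finite ↥K ↥L _ _ (modOfLE hKL) ∧ M.FG) ∨
      (IsFracOf K L ∧ ValAtPrime M hM.isPrime) := by
  by_cases hfrac : IsFracOf K L
  · exact Or.inr ⟨hfrac, case_pos L M K hL hM hM0 hLM hKL hKne hfc hfrac⟩
  · exact Or.inl (case_neg L M K hL hM hM0 hLM hKL hfc hfrac)
end

section
/- With T = L + M, K ⊆ L, R = K + M as above, if T is integrally closed, then the integral closure of R (in its fraction field) equals J + M, where J is the integral closure of K in L. -/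
open Polynomial

lemma pow_sub_pow_mem {T : Type*} [CommRing T] (M : Ideal T) {l m : T} (hm : m ∈ M) :
    ∀ i : ℕ, (l + m) ^ i - l ^ i ∈ M := by
  intro i
  induction i with
  | zero => simpa using M.zero_mem
  | succ n ih =>
      have : (l + m) ^ (n+1) - l ^ (n+1)
          = ((l + m) ^ n - l ^ n) * l + (l + m) ^ n * m := by ring
      rw [this]
      exact M.add_mem (M.mul_mem_right _ ih) (M.mul_mem_left _ hm)

theorem stmt_3 {T : Type*} [CommRing T] [IsDomain T]
    (L : Subring T) (M : Ideal T) (K : Subring T)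
    (hL : IsFieldSub L) (hM : M.IsMaximal) (hM0 : M ≠ ⊥)
    (hLM : DirectSumDecomp L M) (hKL : K ≤ L) (hKne : K ≠ L)
    (hTic : IsIntegrallyClosed T) :
    ∀ x : FractionRing T,
      (@IsIntegral ↥(ringR K M) (FractionRing T) _ _ (algFrac (ringR K M)) x) ↔
        ∃ j ∈ L, ∃ m ∈ M, IsIntegral ↥K j ∧
          x = algebraMap T (FractionRing T) (j + m) := by
  intro x
  set R := ringR K M with hR
  have φinj : Function.Injective (algebraMap T (FractionRing T)) :=
    IsFractionRing.injective T (FractionRing T)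
  constructor
  · rintro ⟨p, pmonic, hp⟩
    -- hp : eval₂ ((algebraMap T (FractionRing T)).comp R.subtype) x p = 0
    have hp' : eval₂ ((algebraMap T (FractionRing T)).comp R.subtype) x p = 0 := hp
    -- x is integral over T
    have hxT : IsIntegral T x := by
      refine ⟨p.map R.subtype, pmonic.map _, ?_⟩
      show eval₂ (algebraMap T (FractionRing T)) x (p.map R.subtype) = 0
      rw [eval₂_map]; exact hp'
    obtain ⟨t, ht⟩ := IsIntegrallyClosed.isIntegral_iff.mp hxT
    have hpt : eval₂ R.subtype t p = 0 := by
      apply φinj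
      rw [Polynomial.hom_eval₂, ht, map_zero]
      exact hp'
    obtain ⟨l, hlL, m, hmM, hlm⟩ := hLM.1 t
    -- decompose coefficients
    have hdec : ∀ i : ℕ, ∃ kk ∈ K, ∃ m' ∈ M, ((p.coeff i : T)) = kk + m' :=
      fun i => (p.coeff i).2
    choose k hkK mm hmmM hco using hdec
    set n := p.natDegree with hn
    set q : Polynomial ↥K := ∑ i ∈ Finset.range (n+1), C (⟨k i, hkK i⟩ : ↥K) * X ^ i with hq
    have hq1 : k n = 1 := by
      have h1 : ((p.coeff n : T)) = 1 := by
        have := pmonic.coeff_natDegree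
        rw [← hn] at this
        exact_mod_cast congrArg (Subtype.val) this
      have hmem : (1 : T) - k n ∈ M := by
        have : (1 : T) - k n = mm n := by rw [← h1, hco n]; ring
        rw [this]; exact hmmM n
      have hLmem : (1 : T) - k n ∈ L := L.sub_mem L.one_mem (hKL (hkK n))
      have := hLM.2 _ hLmem hmem
      linear_combination -this
    have hqcoeff : q.coeff n = 1 := by
      rw [hq]
      rw [finset_sum_coeff]
      simp only [coeff_C_mul, coeff_X_pow, mul_ite, mul_one, mul_zero]
      rw [Finset.sum_ite_eq]
      simp only [Finset.mem_range, lt_add_iff_pos_right, Nat.lt_irrefl, if_pos (Nat.lt_succ_self n)]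
      exact Subtype.ext hq1
    have hqdeg : q.natDegree ≤ n := by
      apply natDegree_sum_le_of_forall_le
      intro i hi
      calc (C (⟨k i, hkK i⟩ : ↥K) * X ^ i).natDegree ≤ _ := natDegree_mul_le
        _ ≤ n := by
            simp only [natDegree_C, natDegree_X_pow, zero_add]
            exact Nat.lt_succ_iff.mp (Finset.mem_range.mp hi)
    have hqmonic : q.Monic := monic_of_natDegree_le_of_coeff_eq_one n hqdeg hqcoeff
    have heval : eval₂ (algebraMap ↥K T) l q = ∑ i ∈ Finset.range (n+1), k i * l ^ i := by
      rw [hq, eval₂_finset_sum]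
      congr 1
      ext i
      rw [eval₂_mul, eval₂_C, eval₂_X_pow]
      rfl
    set S := ∑ i ∈ Finset.range (n+1), k i * l ^ i with hS
    have hSL : S ∈ L := Subring.sum_mem _ fun i _ => L.mul_mem (hKL (hkK i)) (L.pow_mem hlL i)
    have hsum0 : ∑ i ∈ Finset.range (n+1), (k i + mm i) * (l + m) ^ i = 0 := by
      have := hpt
      rw [eval₂_eq_sum_range] at this
      rw [← this, ← hlm]
      refine Finset.sum_congr rfl fun i _ => ?_
      rw [← hco i]
      rfl
    have hSM : S ∈ M := by
      have : S = ∑ i ∈ Finset.range (n+1),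
          (k i * l ^ i - (k i + mm i) * (l + m) ^ i) := by
        rw [Finset.sum_sub_distrib, hsum0, sub_zero]
      rw [this]
      refine Submodule.sum_mem _ fun i _ => ?_
      have h1 : k i * l ^ i - (k i + mm i) * (l + m) ^ i
          = -(k i * ((l + m) ^ i - l ^ i)) - mm i * (l + m) ^ i := by ring
      rw [h1]
      exact M.sub_mem (M.neg_mem (M.mul_mem_left _ (pow_sub_pow_mem M hmM i)))
        (M.mul_mem_right _ (hmmM i))
    have hS0 : S = 0 := hLM.2 _ hSL hSM
    refine ⟨l, hlL, m, hmM, ⟨q, hqmonic, ?_⟩, by rw [← ht, hlm]⟩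
    show eval₂ (algebraMap ↥K T) l q = 0
    rw [heval]; exact hS0
  · rintro ⟨j, hjL, m, hmM, hjint, rfl⟩
    -- j + m is integral over R in T
    have hjR : IsIntegral ↥R j := by
      obtain ⟨q, hq, heval⟩ := hjint
      refine ⟨q.map (Subring.inclusion (K_le_ringR K M)), hq.map _, ?_⟩
      show eval₂ (algebraMap ↥R T) j (q.map (Subring.inclusion (K_le_ringR K M))) = 0
      rw [eval₂_map]
      exact heval
    have hmem : m ∈ R := ⟨0, K.zero_mem, m, hmM, (zero_add m).symm⟩
    have hmT : IsIntegral ↥R m := by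
      refine ⟨X - C (⟨m, hmem⟩ : ↥R), monic_X_sub_C _, ?_⟩
      show eval₂ (algebraMap ↥R T) m _ = 0
      simp only [eval₂_sub, eval₂_X, eval₂_C]
      exact sub_eq_zero.mpr rfl
    have hmR : IsIntegral ↥R (j + m) := hjR.add hmT
    obtain ⟨p, pmonic, hp⟩ := hmR
    refine ⟨p, pmonic, ?_⟩
    show eval₂ ((algebraMap T (FractionRing T)).comp R.subtype)
      (algebraMap T (FractionRing T) (j + m)) p = 0
    rw [← Polynomial.hom_eval₂]
    have : eval₂ R.subtype (j + m) p = 0 := hp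
    rw [this, map_zero]
end

section
/- With T = L + M, K ⊆ L, R = K + M as above, if K is a field and [L:K] = n < ∞, then T is a finitely generated R-module; specifically, any K-basis {1, b₂, …, bₙ} of L generates T as an R-module. -/
theorem stmt_4 {T : Type*} [CommRing T] [IsDomain T]
    (L : Subring T) (M : Ideal T) (K : Subring T)
    (hL : IsFieldSub L) (hM : M.IsMaximal) (hM0 : M ≠ ⊥)
    (hLM : DirectSumDecomp L M) (hKL : K ≤ L) (hKne : K ≠ L)
    (hK : IsField ↥K) (n : ℕ) (hn : 0 < n)
    (hbasis : ∃ b : Fin n → T, (∀ i, b i ∈ L) ∧ b ⟨0, hn⟩ = 1 ∧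
      (∀ l ∈ L, ∃ c : Fin n → T, (∀ i, c i ∈ K) ∧ l = ∑ i, c i * b i) ∧
      (∀ c : Fin n → T, (∀ i, c i ∈ K) → (∑ i, c i * b i) = 0 → ∀ i, c i = 0)) :
    Module.Finite ↥(ringR K M) T ∧
      ∀ b : Fin n → T, (∀ i, b i ∈ L) → b ⟨0, hn⟩ = 1 →
        (∀ l ∈ L, ∃ c : Fin n → T, (∀ i, c i ∈ K) ∧ l = ∑ i, c i * b i) →
        (∀ c : Fin n → T, (∀ i, c i ∈ K) → (∑ i, c i * b i) = 0 → ∀ i, c i = 0) →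
        Submodule.span ↥(ringR K M) (Set.range b) = ⊤ := by
  have key : ∀ b : Fin n → T, b ⟨0, hn⟩ = 1 →
      (∀ l ∈ L, ∃ c : Fin n → T, (∀ i, c i ∈ K) ∧ l = ∑ i, c i * b i) →
      Submodule.span ↥(ringR K M) (Set.range b) = ⊤ := by
    intro b hb0 hspan
    rw [eq_top_iff]
    rintro t -
    obtain ⟨l, hl, m, hm, rfl⟩ := hLM.1 t
    obtain ⟨c, hc, rfl⟩ := hspan l hl
    refine Submodule.add_mem _ (Submodule.sum_mem _ fun i _ => ?_) ?_
    · have h : c i * b i = (⟨c i, K_le_ringR K M (hc i)⟩ : ↥(ringR K M)) • b i := rfl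
      rw [h]
      exact Submodule.smul_mem _ _ (Submodule.subset_span ⟨i, rfl⟩)
    · have h : m = (⟨m, 0, K.zero_mem, m, hm, (zero_add m).symm⟩ : ↥(ringR K M)) • b ⟨0, hn⟩ := by
        rw [hb0]
        simp [Subring.smul_def]
      rw [h]
      exact Submodule.smul_mem _ _ (Submodule.subset_span ⟨_, rfl⟩)
  classical
  obtain ⟨b, hbL, hb0, hsp, hind⟩ := hbasis
  refine ⟨⟨⟨Finset.univ.image b, ?_⟩⟩, fun b _ hb0 hsp _ => key b hb0 hsp⟩
  rw [Finset.coe_image, Finset.coe_univ, Set.image_univ]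
  exact key b hb0 hsp
end

section
/- With T = L + M and R = K + M as above, if L is the fraction field of K, then T equals the localization of R at the multiplicative set K \ {0}. -/
/-- The multiplicative set of nonzero elements of `K`, inside the subring `S`. -/
def subK {T : Type*} [CommRing T] [IsDomain T] (K : Subring T) (S : Subring T) : Submonoid ↥S where
  carrier := {x | (x : T) ∈ K ∧ (x : T) ≠ 0}
  one_mem' := ⟨by simpa using K.one_mem, by simp⟩
  mul_mem' := by
    rintro a b ⟨ha1, ha2⟩ ⟨hb1, hb2⟩
    exact ⟨by simpa using K.mul_mem ha1 hb1, by simpa using mul_ne_zero ha2 hb2⟩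

theorem Subring.isLocalization_of_isUnit_of_exists_mul_mem {T : Type*} [CommRing T]
    {S : Subring T} (N : Submonoid S) (hunit : ∀ y ∈ N, IsUnit (y : T))
    (hden : ∀ t : T, ∃ y ∈ N, t * y ∈ S) : IsLocalization N T :=
  (isLocalization_iff N T).mpr
    ⟨fun y => hunit y y.2,
      fun t => by
        obtain ⟨y, hyN, hty⟩ := hden t
        exact ⟨(⟨t * y, hty⟩, ⟨y, hyN⟩), rfl⟩,
      fun h => ⟨1, congrArg _ (Subtype.ext h)⟩⟩

section

variable {T : Type*} [CommRing T]

theorem IsFieldSub.isUnit {L : Subring T} (hL : IsFieldSub L) {x : T} (hx : x ∈ L)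
    (hx0 : x ≠ 0) : IsUnit x := by
  obtain ⟨y, -, hxy⟩ := hL x hx hx0
  exact .of_mul_eq_one y hxy

theorem exists_mul_mem_ringR {L K : Subring T} {M : Ideal T} (hLM : DirectSumDecomp L M)
    (hfrac : IsFracOf K L) (t : T) : ∃ b ∈ K, b ≠ 0 ∧ t * b ∈ ringR K M := by
  obtain ⟨l, hl, m, hm, rfl⟩ := hLM.1 t
  obtain ⟨a, ha, b, hb, hb0, hab⟩ := hfrac l hl
  refine ⟨b, hb, hb0, a, ha, m * b, M.mul_mem_right b hm, ?_⟩
  rw [add_mul, hab]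

end

theorem stmt_5_general {T : Type*} [CommRing T] [IsDomain T]
    (L : Subring T) (M : Ideal T) (K : Subring T)
    (hL : IsFieldSub L)
    (hLM : DirectSumDecomp L M) (hKL : K ≤ L)
    (hfrac : IsFracOf K L) :
    IsLocalization (subK K (ringR K M)) T := by
  refine Subring.isLocalization_of_isUnit_of_exists_mul_mem _
    (fun y hy => hL.isUnit (hKL hy.1) hy.2) fun t => ?_
  obtain ⟨b, hb, hb0, htb⟩ := exists_mul_mem_ringR hLM hfrac t
  exact ⟨⟨b, K_le_ringR K M hb⟩, ⟨hb, hb0⟩, htb⟩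

theorem stmt_5 {T : Type*} [CommRing T] [IsDomain T]
    (L : Subring T) (M : Ideal T) (K : Subring T)
    (hL : IsFieldSub L) (hM : M.IsMaximal) (hM0 : M ≠ ⊥)
    (hLM : DirectSumDecomp L M) (hKL : K ≤ L) (hKne : K ≠ L)
    (hfrac : IsFracOf K L) :
    IsLocalization (subK K (ringR K M)) T :=
  stmt_5_general L M K hL hLM hKL hfrac
end

section
/- With T = L + M and R = K + M as above, if L is the fraction field of K, then R is a faithfully flat K-module. -/
/-!
Since `L ∩ M = 0`, the map `(k, m) ↦ k + m` identifies `R = K + M` with `K × M` as a `K`-module.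
The ideal `M` is a vector space over the field `L`, hence flat over `L`, and `L` is a localization
of `K`, so `M` is flat over `K`. A product of a faithfully flat module (here `K` itself) and a flat
module is faithfully flat, because tensoring commutes with `×`.
-/

open TensorProduct

instance Module.Flat.prod {R A B : Type*} [CommRing R] [AddCommGroup A] [AddCommGroup B]
    [Module R A] [Module R B] [Module.Flat R A] [Module.Flat R B] :
    Module.Flat R (A × B) := by
  refine Module.Flat.iff_lTensor_preserves_injective_linearMap.mpr fun N P _ _ _ _ f hf => ?_
  have hcomm : (prodLeft R R A B P).toLinearMap ∘ₗ f.lTensor (A × B) =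
      (f.lTensor A).prodMap (f.lTensor B) ∘ₗ (prodLeft R R A B N).toLinearMap :=
    TensorProduct.ext' fun _ _ => rfl
  have hprod : Function.Injective ((f.lTensor A).prodMap (f.lTensor B)) :=
    Prod.map_injective.mpr ⟨Module.Flat.lTensor_preserves_injective_linearMap f hf,
      Module.Flat.lTensor_preserves_injective_linearMap f hf⟩
  refine Function.Injective.of_comp (f := prodLeft R R A B P) ?_
  rw [← LinearEquiv.coe_coe, ← LinearMap.coe_comp, hcomm, LinearMap.coe_comp]
  exact hprod.comp (prodLeft R R A B N).injective

instance Module.FaithfullyFlat.prod {R A B : Type*} [CommRing R] [AddCommGroup A] [AddCommGroup B]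
    [Module R A] [Module R B] [Module.FaithfullyFlat R A] [Module.Flat R B] :
    Module.FaithfullyFlat R (A × B) := by
  rw [Module.FaithfullyFlat.iff_flat_and_lTensor_faithful]
  exact ⟨Module.Flat.prod, fun N _ _ _ => (prodLeft R R A B N).toEquiv.nontrivial⟩

section

variable {T : Type*} [CommRing T]

theorem IsFieldSub.isField [Nontrivial T] {L : Subring T} (hL : IsFieldSub L) : IsField L where
  exists_pair_ne := ⟨0, 1, zero_ne_one⟩
  mul_comm := mul_comm
  mul_inv_cancel {x} hx := by
    obtain ⟨y, hy, hxy⟩ := hL x x.2 (Subtype.coe_ne_coe.mpr hx)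
    exact ⟨⟨y, hy⟩, Subtype.ext hxy⟩

theorem IsFracOf.isFractionRing [Nontrivial T] {K L : Subring T} (hfrac : IsFracOf K L)
    (hL : IsFieldSub L) (hKL : K ≤ L) :
    letI := (Subring.inclusion hKL).toAlgebra
    IsFractionRing K L := by
  let := hL.isField.toField
  let := (Subring.inclusion hKL).toAlgebra
  have : FaithfulSMul K L :=
    (faithfulSMul_iff_algebraMap_injective K L).mpr (Subring.inclusion_injective hKL)
  refine IsFractionRing.of_field K L fun z => ?_
  obtain ⟨a, ha, b, hb, hb0, hzb⟩ := hfrac z z.2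
  exact ⟨⟨a, ha⟩, ⟨b, hb⟩, eq_div_of_mul_eq (Subtype.coe_ne_coe.mp hb0) (Subtype.ext hzb)⟩

theorem IsFracOf.flat_idealAsMod [Nontrivial T] {K L : Subring T} (hfrac : IsFracOf K L)
    (hL : IsFieldSub L) (hKL : K ≤ L) (M : Ideal T) : Module.Flat K (idealAsMod K M) := by
  let := hL.isField.toField
  let := (Subring.inclusion hKL).toAlgebra
  have := hfrac.isFractionRing hL hKL
  have : Module.Flat K L := IsLocalization.flat L (nonZeroDivisors K)
  have : IsScalarTower K L T := .of_algebraMap_eq fun _ => rfl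
  show Module.Flat K ((idealAsMod L M).restrictScalars K)
  exact Module.Flat.trans K L _

section Splitting

variable [IsDomain T] (K : Subring T) (M : Ideal T)

noncomputable def prodToRingR :
    letI := modOfLE (K_le_ringR K M)
    (K × idealAsMod K M) →ₗ[K] ringR K M :=
  letI := modOfLE (K_le_ringR K M)
  { toFun p := ⟨p.1 + p.2, p.1, p.1.2, p.2, p.2.2, rfl⟩
    map_add' _ _ := Subtype.ext (add_add_add_comm _ _ _ _)
    map_smul' k p := Subtype.ext (mul_add (k : T) p.1 p.2).symm }

theorem prodToRingR_surjective : Function.Surjective (prodToRingR K M) := by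
  rintro ⟨_, k, hk, m, hm, rfl⟩
  exact ⟨(⟨k, hk⟩, ⟨m, hm⟩), rfl⟩

variable {K M} in
theorem prodToRingR_injective (hKM : ∀ x ∈ K, x ∈ M → x = 0) :
    Function.Injective (prodToRingR K M) := by
  rintro ⟨k₁, m₁⟩ ⟨k₂, m₂⟩ h
  have h : (k₁ : T) + m₁ = k₂ + m₂ := congrArg Subtype.val h
  have hk : (k₁ : T) - k₂ = 0 := hKM _ (K.sub_mem k₁.2 k₂.2)
    (by rw [show (k₁ : T) - k₂ = m₂ - m₁ by linear_combination h]; exact M.sub_mem m₂.2 m₁.2)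
  ext
  · linear_combination hk
  · linear_combination h - hk

end Splitting

end

theorem stmt_6_general {T : Type*} [CommRing T] [IsDomain T]
    (L : Subring T) (M : Ideal T) (K : Subring T)
    (hL : IsFieldSub L)
    (hLM : DirectSumDecomp L M) (hKL : K ≤ L)
    (hfrac : IsFracOf K L) :
    @Module.FaithfullyFlat ↥K ↥(ringR K M) _ _ (modOfLE (K_le_ringR K M)) := by
  let := modOfLE (K_le_ringR K M)
  have := hfrac.flat_idealAsMod hL hKL M
  have hKM : ∀ x ∈ K, x ∈ M → x = 0 := fun x hxK hxM => hLM.2 x (hKL hxK) hxM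
  exact .of_linearEquiv _ _ (LinearEquiv.ofBijective (prodToRingR K M)
    ⟨prodToRingR_injective hKM, prodToRingR_surjective K M⟩).symm

theorem stmt_6 {T : Type*} [CommRing T] [IsDomain T]
    (L : Subring T) (M : Ideal T) (K : Subring T)
    (hL : IsFieldSub L) (hM : M.IsMaximal) (hM0 : M ≠ ⊥)
    (hLM : DirectSumDecomp L M) (hKL : K ≤ L) (hKne : K ≠ L)
    (hfrac : IsFracOf K L) :
    @Module.FaithfullyFlat ↥K ↥(ringR K M) _ _ (modOfLE (K_le_ringR K M)) :=
  stmt_6_general L M K hL hLM hKL hfrac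
end

section
/- With T = L + M, R = K + M as above where K is a field and [L:K] = n, let {1, b₂, …, bₙ} be a K-basis of L and φ : Rⁿ → T the R-module map φ(r₁, …, rₙ) = Σ rᵢbᵢ (with b₁ = 1). Then φ is surjective and its kernel is isomorphic as an R-module to M^(n-1). -/
set_option maxHeartbeats 1000000 in
set_option synthInstance.maxHeartbeats 400000 in
theorem stmt_7 {T : Type*} [CommRing T] [IsDomain T]
    (L : Subring T) (M : Ideal T) (K : Subring T)
    (hL : IsFieldSub L) (hM : M.IsMaximal) (hM0 : M ≠ ⊥)
    (hLM : DirectSumDecomp L M) (hKL : K ≤ L) (hKne : K ≠ L)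
    (hK : IsField ↥K) (n : ℕ) (hn : 0 < n)
    (b : Fin n → T) (hbL : ∀ i, b i ∈ L) (hb0 : b ⟨0, hn⟩ = 1)
    (hspan : ∀ l ∈ L, ∃ c : Fin n → T, (∀ i, c i ∈ K) ∧ l = ∑ i, c i * b i)
    (hindep : ∀ c : Fin n → T, (∀ i, c i ∈ K) → (∑ i, c i * b i) = 0 → ∀ i, c i = 0)
    (φ : (Fin n → ↥(ringR K M)) →ₗ[↥(ringR K M)] T)
    (hφ : ∀ r : Fin n → ↥(ringR K M), φ r = ∑ i, (r i : T) * b i) :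
    Function.Surjective φ ∧
      Nonempty ((LinearMap.ker φ) ≃ₗ[↥(ringR K M)]
        (Fin (n - 1) → ↥(idealAsMod (ringR K M) M))) := by

  obtain _ | n := n
  · exact absurd hn (by omega)
  show Function.Surjective φ ∧ Nonempty ((LinearMap.ker φ) ≃ₗ[↥(ringR K M)] (Fin n → ↥(idealAsMod (ringR K M) M)))
  have hMR : ∀ x ∈ M, x ∈ ringR K M := fun x hx => ⟨0, K.zero_mem, x, hx, (zero_add x).symm⟩
  have hzero : b 0 = 1 := by simpa using hb0
  -- every kernel element has all coordinates in M
  have hker : ∀ r : Fin (n+1) → ↥(ringR K M), φ r = 0 → ∀ i, (r i : T) ∈ M := by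
    intro r h0 i
    choose k hk m hm hkm using fun j => (r j).2
    have hsum : ∑ j, k j * b j + ∑ j, m j * b j = 0 := by
      rw [← Finset.sum_add_distrib]
      rw [hφ r] at h0
      rw [← h0]
      exact Finset.sum_congr rfl fun j _ => by rw [hkm j]; ring

    have hLmem : ∑ j, k j * b j ∈ L :=
      Subring.sum_mem L fun j _ => L.mul_mem (hKL (hk j)) (hbL j)
    have hMmem : ∑ j, k j * b j ∈ M := by
      have : ∑ j, k j * b j = -∑ j, m j * b j := eq_neg_of_add_eq_zero_left hsum
      rw [this]
      exact M.neg_mem (Ideal.sum_mem M fun j _ => M.mul_mem_right _ (hm j))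
    have hk0 : ∀ j, k j = 0 := hindep k hk (hLM.2 _ hLmem hMmem)
    rw [hkm i, hk0 i, zero_add]
    exact hm i
  constructor
  · -- surjectivity
    intro t
    obtain ⟨l, hl, m, hm, rfl⟩ := hLM.1 t
    obtain ⟨c, hc, hlc⟩ := hspan l hl
    refine ⟨Fin.cons ⟨c 0 + m, c 0, hc 0, m, hm, rfl⟩
      (fun i => ⟨c i.succ, K_le_ringR K M (hc i.succ)⟩), ?_⟩
    rw [hφ, Fin.sum_univ_succ, hlc, Fin.sum_univ_succ]
    simp only [Fin.cons_zero, Fin.cons_succ, hzero]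
    ring
  · -- kernel isomorphism
    refine ⟨{
      toFun := fun x => fun i =>
        ⟨(x.1 i.succ : T), hker x.1 (LinearMap.mem_ker.mp x.2) i.succ⟩
      map_add' := by
        intro x y
        funext i
        apply Subtype.ext
        simp
      map_smul' := by
        intro s x
        funext i
        apply Subtype.ext
        simp [Submodule.coe_smul]
        rfl
      invFun := fun m =>
        ⟨Fin.cons ⟨-∑ i, (m i : T) * b i.succ,
            hMR _ (M.neg_mem (Ideal.sum_mem M fun i _ => M.mul_mem_right _ (m i).2))⟩
          (fun i => ⟨(m i : T), hMR _ (m i).2⟩), by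
          rw [LinearMap.mem_ker, hφ, Fin.sum_univ_succ]
          simp only [Fin.cons_zero, Fin.cons_succ, hzero]
          ring⟩
      left_inv := by
        intro x
        apply Subtype.ext
        funext j
        refine Fin.cases ?_ ?_ j
        · apply Subtype.ext
          simp only [Fin.cons_zero]
          have h0 := LinearMap.mem_ker.mp x.2
          rw [hφ, Fin.sum_univ_succ, hzero, mul_one] at h0
          exact (eq_neg_of_add_eq_zero_left h0).symm
        · intro i
          apply Subtype.ext
          simp [Fin.cons_succ]
      right_inv := by
        intro m
        funext i
        apply Subtype.ext
        simp [Fin.cons_succ] }⟩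
end

section
/- With T = L + M, R = K + M as above, if T_M is a valuation domain, then for every ideal C of T, the quotient C/MC is an L-vector space of dimension at most 1. -/
/-! Pick `c ∈ C` whose image in the valuation ring `T_M` does not lie in `(MC)_M = 𝔪 · C_M`
(or `c = 0` if there is none). Since divisibility is total in a valuation ring, such a `c` divides in
`T_M` every element of `C_M`, so `C_M = (Tc + MC)_M`. This descends to `T`: if `x ∈ C` and
`s x ∈ Tc + MC` with `s ∉ M`, then `x ∈ Tc + MC`, because `M x ⊆ MC` and `s` is invertible
modulo `M`. -/

theorem Ideal.IsMaximal.mem_of_mul_mem {R : Type*} [CommRing R] {M J : Ideal R}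
    (hM : M.IsMaximal) {x s : R} (hMx : ∀ m ∈ M, m * x ∈ J) (hs : s ∉ M) (hsx : s * x ∈ J) :
    x ∈ J := by
  obtain ⟨a, m, hm, hinv⟩ := hM.exists_inv hs
  have hx : x = a * (s * x) + m * x := by linear_combination (-x) * hinv
  rw [hx]
  exact J.add_mem (J.mul_mem_left a hsx) (hMx m hm)

theorem IsLocalization.AtPrime.mem_of_algebraMap_mem_map {R S : Type*} [CommRing R] [CommRing S]
    [Algebra R S] {M : Ideal R} (hM : M.IsMaximal) [IsLocalization.AtPrime S M]
    {C J : Ideal R} (hCJ : M * C ≤ J) {x : R} (hx : x ∈ C)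
    (hfx : algebraMap R S x ∈ J.map (algebraMap R S)) : x ∈ J := by
  obtain ⟨⟨i, s⟩, his⟩ := (IsLocalization.mem_map_algebraMap_iff M.primeCompl S).mp hfx
  obtain ⟨u, hu⟩ := IsLocalization.exists_of_eq (M := M.primeCompl) (S := S)
    (x := x * s) (y := i) (by rwa [map_mul])
  refine hM.mem_of_mul_mem (fun m hm => hCJ (Ideal.mul_mem_mul hm hx)) (u * s).2 ?_
  rw [Submonoid.coe_mul, mul_assoc, mul_comm (s : R), hu]
  exact J.mul_mem_left _ i.2

theorem dvd_of_mem_of_notMem_maximalIdeal_mul {V : Type*} [CommRing V] [IsLocalRing V]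
    [PreValuationRing V] {I : Ideal V} {a b : V} (hb : b ∈ I)
    (ha : a ∉ IsLocalRing.maximalIdeal V * I) : a ∣ b := by
  obtain hab | ⟨t, rfl⟩ := ValuationRing.dvd_total a b
  · exact hab
  by_cases ht : IsUnit t
  · exact (Units.mul_right_dvd (u := ht.unit)).mpr dvd_rfl
  · exact absurd (mul_comm b t ▸ Ideal.mul_mem_mul ht hb) ha

/-- `C/MC` has dimension at most `1` over `L ≅ T/M` iff it is a cyclic `T`-module,
i.e. `C = Tc + MC` for some `c ∈ C`. -/
theorem stmt_8_general {T : Type*} [CommRing T] [IsDomain T]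
    (M : Ideal T) (hM : M.IsMaximal) (hval : ValAtPrime M hM.isPrime) :
    ∀ C : Ideal T, ∃ c ∈ C, C ≤ Ideal.span {c} ⊔ M * C := by
  intro C
  have : ValuationRing (Localization.AtPrime M) := hval
  set f := algebraMap T (Localization.AtPrime M)
  have hmap : (M * C).map f = IsLocalRing.maximalIdeal _ * C.map f := by
    rw [Ideal.map_mul, Localization.AtPrime.map_eq_maximalIdeal]
  by_cases hgen : ∃ c ∈ C, f c ∉ (M * C).map f
  · obtain ⟨c, hc, hcM⟩ := hgen
    refine ⟨c, hc, fun x hx => ?_⟩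
    have hdvd : f c ∣ f x :=
      dvd_of_mem_of_notMem_maximalIdeal_mul (Ideal.mem_map_of_mem f hx) (hmap ▸ hcM)
    refine IsLocalization.AtPrime.mem_of_algebraMap_mem_map (S := Localization.AtPrime M) hM
      le_sup_right hx (Ideal.map_mono le_sup_left ?_)
    rw [Ideal.map_span, Set.image_singleton]
    exact Ideal.mem_span_singleton.mpr hdvd
  · push Not at hgen
    refine ⟨0, C.zero_mem, fun x hx => ?_⟩
    rw [Ideal.span_singleton_zero (α := T), bot_sup_eq]
    exact IsLocalization.AtPrime.mem_of_algebraMap_mem_map hM le_rfl hx (hgen x hx)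

/-- `C/MC` is an `L ≅ T/M`-vector space of dimension at most `1`: equivalently,
`C/MC` is a cyclic `T`-module, i.e. `C = Tc + MC` for some `c ∈ C`. -/
theorem stmt_8 {T : Type*} [CommRing T] [IsDomain T]
    (L : Subring T) (M : Ideal T) (K : Subring T)
    (hL : IsFieldSub L) (hM : M.IsMaximal) (hM0 : M ≠ ⊥)
    (hLM : DirectSumDecomp L M) (hKL : K ≤ L) (hKne : K ≠ L)
    (hval : ValAtPrime M hM.isPrime) :
    ∀ C : Ideal T, ∃ c ∈ C, C ≤ Ideal.span {c} ⊔ M * C :=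
  stmt_8_general M hM hval
end

section
/- Let K ⊆ L be fields (K ≠ L). The composite ring R = K + XL[X] is Noetherian if and only if [L:K] < ∞. -/
section CompositeSetup

variable {L : Type*} [Field L]

/-- The polynomial composite `K + X L[X]` as a subring of `L[X]`. -/
def composite (K : Subring L) : Subring (Polynomial L) where
  carrier := {p | p.coeff 0 ∈ K}
  one_mem' := by simpa using K.one_mem
  zero_mem' := by simpa using K.zero_mem
  add_mem' := by
    intro a b ha hb
    simpa [Polynomial.coeff_add] using K.add_mem ha hb
  neg_mem' := by
    intro a ha
    simpa [Polynomial.coeff_neg] using K.neg_mem ha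
  mul_mem' := by
    intro a b ha hb
    simpa [Polynomial.mul_coeff_zero] using K.mul_mem ha hb

/-- `L` is the fraction field of the subring `K`. -/
def FracOfField (K : Subring L) : Prop :=
  ∀ l : L, ∃ a ∈ K, ∃ b ∈ K, b ≠ 0 ∧ l * b = a

end CompositeSetup

/-!
If `K + X L[X]` is Noetherian, its ideal `X L[X]` is generated by finitely many `g`, and reading
off coefficients of `X` in `X l = ∑ fᵍ g` shows that the `X`-coefficients of the `g` span `L`
over `K`. Conversely, if `L` is finite over `K` then `K` is a field, so `K[X]` is Noetherian,
and `K + X L[X]` is a `K[X]`-submodule of the finite `K[X]`-module `L[X] = K[X] ⊗[K] L`.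
-/

open Polynomial

theorem Polynomial.coeff_one_mul_of_coeff_zero_eq_zero {R : Type*} [Semiring R] (p : R[X])
    {q : R[X]} (hq : q.coeff 0 = 0) : (p * q).coeff 1 = p.coeff 0 * q.coeff 1 := by
  simp [coeff_mul, Finset.Nat.antidiagonal_succ, hq]

attribute [local instance] Polynomial.algebra in
theorem Module.Finite.polynomial (R S : Type*) [CommRing R] [CommRing S] [Algebra R S]
    [Module.Finite R S] : Module.Finite R[X] S[X] :=
  Module.Finite.equiv (Algebra.IsPushout.out (R := R) (S := R[X]) (R' := S) (S' := S[X])).equiv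

theorem Subring.isNoetherianRing_of_finite {L : Type*} [Field L] (K : Subring L)
    [Module.Finite K L] : IsNoetherianRing K :=
  let := (isField_of_isIntegral_of_isField (R := K) (S := L) Subtype.val_injective
    (Field.toIsField L)).toField
  inferInstance

namespace composite

variable {L : Type*} [Field L] {K : Subring L}

theorem mem_iff {p : L[X]} : p ∈ composite K ↔ p.coeff 0 ∈ K := Iff.rfl

theorem X_mul_mem (q : L[X]) : X * q ∈ composite K := by
  simp [mem_iff, K.zero_mem]

variable (K) in
/-- The ideal `X L[X]` of `K + X L[X]`. -/
noncomputable def xIdeal : Ideal (composite K) :=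
  RingHom.ker (constantCoeff.comp (composite K).subtype)

theorem mem_xIdeal {p : composite K} : p ∈ xIdeal K ↔ (p : L[X]).coeff 0 = 0 := by
  simp [xIdeal, RingHom.mem_ker, constantCoeff_apply]

theorem coeff_one_mem_span {G : Set (composite K)} (hG : G ⊆ xIdeal K) {p : composite K}
    (hp : p ∈ Ideal.span G) :
    (p : L[X]).coeff 1 ∈ Submodule.span K ((fun g : composite K ↦ (g : L[X]).coeff 1) '' G) := by
  induction hp using Submodule.span_induction with
  | mem g hg => exact Submodule.subset_span ⟨g, hg, rfl⟩
  | zero => simp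
  | add p q _ _ hp hq => simpa using add_mem hp hq
  | smul r p hpG hp =>
    have hp0 : (p : L[X]).coeff 0 = 0 := mem_xIdeal.mp (Ideal.span_le.mpr hG hpG)
    rw [smul_eq_mul, Subring.coe_mul, coeff_one_mul_of_coeff_zero_eq_zero _ hp0]
    exact Submodule.smul_mem _ (⟨_, r.2⟩ : K) hp

theorem finite_of_isNoetherianRing [IsNoetherianRing (composite K)] : Module.Finite K L := by
  classical
  obtain ⟨G, hG⟩ := (IsNoetherian.noetherian (xIdeal K) : (xIdeal K).FG)
  replace hG : Ideal.span (G : Set (composite K)) = xIdeal K := hG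
  refine ⟨⟨G.image fun g : composite K ↦ (g : L[X]).coeff 1, eq_top_iff.mpr fun l _ ↦ ?_⟩⟩
  have hXl : (⟨X * C l, X_mul_mem _⟩ : composite K) ∈ Ideal.span G := by
    rw [hG, mem_xIdeal]
    simp
  simpa using coeff_one_mem_span (hG ▸ Ideal.subset_span) hXl

section

attribute [local instance] Polynomial.algebra

variable (K) in
noncomputable def toSubalgebra : Subalgebra K[X] L[X] where
  __ := composite K
  algebraMap_mem' p := by
    rw [Polynomial.algebraMap_def, coe_mapRingHom]
    show _ ∈ composite K
    rw [mem_iff, coeff_map]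
    exact (p.coeff 0).2

theorem isNoetherianRing_of_finite [Module.Finite K L] : IsNoetherianRing (composite K) := by
  have := K.isNoetherianRing_of_finite
  have := Module.Finite.polynomial K L
  have : IsNoetherian K[X] (toSubalgebra K) := isNoetherian_submodule' (toSubalgebra K).toSubmodule
  exact (isNoetherianRing_iff.mpr (isNoetherian_of_tower K[X] this) :
    IsNoetherianRing (toSubalgebra K))

end

end composite

theorem stmt_10_general {L : Type*} [Field L] (K : Subring L) :
    IsNoetherianRing ↥(composite K) ↔ Module.Finite ↥K L :=
  ⟨fun _ ↦ composite.finite_of_isNoetherianRing, fun _ ↦ composite.isNoetherianRing_of_finite⟩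

theorem stmt_10 {L : Type*} [Field L] (K : Subring L)
    (hK : ∀ x ∈ K, x ≠ 0 → x⁻¹ ∈ K) (hKne : K ≠ ⊤) :
    IsNoetherianRing ↥(composite K) ↔ Module.Finite ↥K L :=
  stmt_10_general K
end

section
/- With T = L + M, R = K + M as above, R is a Prüfer domain if and only if T is a Prüfer domain, L is the fraction field of K, and K is a Prüfer domain. -/
/-!
A domain is Prüfer iff every two-generated ideal `(α, β)` with `α ≠ 0` is invertible, which is an
elementwise condition on `α, β`; larger finitely generated ideals reduce to this through
`(I + J) (I + K) (J + K) = (I + J + K) (I J + I K + J K)`.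

The `L`-component `π : T → T` is a ring homomorphism (it factors through `T / M ≅ L`), and
`R = K + M = π⁻¹ K`. If `R` is Prüfer, multiplying a pair of `T` by a nonzero `m ∈ M` moves it into
`M ⊆ R`, so `R` solves the pair conditions of `T` with coefficients in `R`: this gives `T` Prüfer,
and applying `π` to a solution for `(1, l)` writes `l ∈ L` as a fraction over `K`; `π` also
retracts `R` onto `K`, so `K` is Prüfer. Conversely, a solution in `T` with `π s ≠ 0` is rescaled
by elements of `K` obtained from `K` being Prüfer with fraction field `L`, and corrected by an
element of `M`, until all its coefficients lie in `R`.
-/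

open scoped nonZeroDivisors

/-- The elementwise form of "`(α, β)` is invertible": for `x = s / α`, `y = u / α` one has
`α x = s`, `β x = t`, `α y = u`, `β y = v`, so `(α, β) (x, y)` contains `s + v = 1`. -/
def PairInvertible (A : Type*) [CommRing A] : Prop :=
  ∀ α β : A, α ≠ 0 → ∃ s t u v : A, s + v = 1 ∧ s * β = t * α ∧ u * β = v * α

theorem Ideal.sup_mul_sup_mul_sup {R : Type*} [CommRing R] (I J K : Ideal R) :
    (I ⊔ J) * (I ⊔ K) * (J ⊔ K) = (I ⊔ J ⊔ K) * (I * J ⊔ I * K ⊔ J * K) := by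
  -- both sides expand to the same sum up to multiplicities 2 and 3, which `⊔` absorbs
  simp only [← Submodule.add_eq_sup]
  have two : ∀ X : Ideal R, X * 2 = X := fun X => by rw [mul_two, Submodule.add_eq_sup, sup_idem]
  have three : ∀ X : Ideal R, X * 3 = X := fun X => by
    rw [show (3 : Ideal R) = 2 + 1 by norm_num, mul_add, mul_one, two, Submodule.add_eq_sup,
      sup_idem]
  ring_nf
  rw [two, three]

section FractionalIdeal

variable {A : Type*} [CommRing A]

theorem isUnit_coeIdeal_sup_sup {I J K : Ideal A}
    (hIJ : IsUnit ((I ⊔ J : Ideal A) : FractionalIdeal A⁰ (FractionRing A)))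
    (hIK : IsUnit ((I ⊔ K : Ideal A) : FractionalIdeal A⁰ (FractionRing A)))
    (hJK : IsUnit ((J ⊔ K : Ideal A) : FractionalIdeal A⁰ (FractionRing A))) :
    IsUnit ((I ⊔ J ⊔ K : Ideal A) : FractionalIdeal A⁰ (FractionRing A)) := by
  have h := (hIJ.mul hIK).mul hJK
  rw [← FractionalIdeal.coeIdeal_mul, ← FractionalIdeal.coeIdeal_mul, Ideal.sup_mul_sup_mul_sup,
    FractionalIdeal.coeIdeal_mul] at h
  exact isUnit_of_mul_isUnit_left h

theorem coeIdeal_span_pair (a b : A) :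
    ((Ideal.span {a, b} : Ideal A) : FractionalIdeal A⁰ (FractionRing A)) =
      FractionalIdeal.spanSingleton _ (algebraMap A _ a) +
        FractionalIdeal.spanSingleton _ (algebraMap A _ b) := by
  rw [Ideal.span_insert, FractionalIdeal.coeIdeal_sup, FractionalIdeal.coeIdeal_span_singleton,
    FractionalIdeal.coeIdeal_span_singleton]

theorem exists_of_isUnit_coeIdeal_span_pair {α β : A}
    (h : IsUnit ((Ideal.span {α, β} : Ideal A) : FractionalIdeal A⁰ (FractionRing A))) :
    ∃ s t u v : A, s + v = 1 ∧ s * β = t * α ∧ u * β = v * α := by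
  set f := algebraMap A (FractionRing A)
  obtain ⟨J, hJ⟩ := isUnit_iff_exists_inv.mp h
  have h1 : (1 : FractionRing A) ∈ ((Ideal.span {α, β} : Ideal A) : FractionalIdeal A⁰ _) * J := by
    rw [hJ]; exact FractionalIdeal.one_mem_one _
  rw [coeIdeal_span_pair, add_mul, FractionalIdeal.mem_add] at h1
  obtain ⟨_, hαx, _, hβy, hxy⟩ := h1
  obtain ⟨x, hx, rfl⟩ := FractionalIdeal.mem_singleton_mul.mp hαx
  obtain ⟨y, hy, rfl⟩ := FractionalIdeal.mem_singleton_mul.mp hβy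
  have integral : ∀ w ∈ J, ∀ γ ∈ ({α, β} : Set A), ∃ c : A, f c = f γ * w := fun w hw γ hγ =>
    (FractionalIdeal.mem_one_iff _).mp (hJ ▸ FractionalIdeal.mul_mem_mul
      (FractionalIdeal.mem_coeIdeal_of_mem _ (Ideal.subset_span hγ)) hw)
  obtain ⟨s, hs⟩ := integral x hx α (by simp)
  obtain ⟨t, ht⟩ := integral x hx β (by simp)
  obtain ⟨u, hu⟩ := integral y hy α (by simp)
  obtain ⟨v, hv⟩ := integral y hy β (by simp)
  have finj := IsFractionRing.injective A (FractionRing A)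
  refine ⟨s, t, u, v, finj ?_, finj ?_, finj ?_⟩
  · rw [map_add, map_one, hs, hv, hxy]
  · rw [map_mul, map_mul, hs, ht]; ring
  · rw [map_mul, map_mul, hu, hv]; ring

variable [IsDomain A]

theorem isUnit_coeIdeal_span_pair {α β s t u v : A} (hα : α ≠ 0)
    (h1 : s + v = 1) (h2 : s * β = t * α) (h3 : u * β = v * α) :
    IsUnit ((Ideal.span {α, β} : Ideal A) : FractionalIdeal A⁰ (FractionRing A)) := by
  set f := algebraMap A (FractionRing A)
  have hfα : f α ≠ 0 := (map_ne_zero_iff f (IsFractionRing.injective A _)).2 hα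
  refine IsUnit.of_mul_eq_one (FractionalIdeal.spanSingleton _ ((f α)⁻¹ * f s) +
    FractionalIdeal.spanSingleton _ ((f α)⁻¹ * f u)) ?_
  have eαx : f α * ((f α)⁻¹ * f s) = f s := by field_simp
  have eαy : f α * ((f α)⁻¹ * f u) = f u := by field_simp
  have eβx : f β * ((f α)⁻¹ * f s) = f t := by
    field_simp; linear_combination (by simpa only [map_mul] using congrArg f h2 :
      f s * f β = f t * f α)
  have eβy : f β * ((f α)⁻¹ * f u) = f v := by
    field_simp; linear_combination (by simpa only [map_mul] using congrArg f h3 :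
      f u * f β = f v * f α)
  have hspan : Ideal.span {s, t, u, v} = ⊤ := by
    rw [Ideal.eq_top_iff_one, ← h1]
    exact Ideal.add_mem _ (Ideal.subset_span (by simp)) (Ideal.subset_span (by simp))
  simp only [coeIdeal_span_pair, add_mul, mul_add, FractionalIdeal.spanSingleton_mul_spanSingleton]
  rw [eαx, eαy, eβx, eβy, ← FractionalIdeal.coeIdeal_top, ← hspan]
  simp only [Ideal.span_insert, FractionalIdeal.coeIdeal_sup,
    FractionalIdeal.coeIdeal_span_singleton, add_assoc]
  rfl


theorem PairInvertible.isUnit_coeIdeal_span_insert (h : PairInvertible A) (S : Finset A)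
    {a : A} (ha : a ≠ 0) :
    IsUnit ((Ideal.span (insert a (S : Set A)) : Ideal A) :
      FractionalIdeal A⁰ (FractionRing A)) := by
  classical
  induction S using Finset.induction_on generalizing a with
  | empty =>
    obtain ⟨s, t, u, v, h1, h2, h3⟩ := h a a ha
    simpa using isUnit_coeIdeal_span_pair ha h1 h2 h3
  | insert b S _ ih =>
    rw [Finset.coe_insert]
    rcases eq_or_ne b 0 with rfl | hb
    · rw [Set.insert_comm, Ideal.span_insert_zero]
      exact ih ha
    obtain ⟨s, t, u, v, h1, h2, h3⟩ := h a b ha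
    have hab := isUnit_coeIdeal_span_pair ha h1 h2 h3
    have haS := ih ha
    have hbS := ih hb
    rw [Ideal.span_insert] at hab haS hbS
    rw [Ideal.span_insert, Ideal.span_insert, ← sup_assoc]
    exact isUnit_coeIdeal_sup_sup hab haS hbS

theorem isPruferDomain_iff_pairInvertible : IsPruferDomain A ↔ PairInvertible A := by
  classical
  refine ⟨fun h α β hα => exists_of_isUnit_coeIdeal_span_pair (h _ ?_ ⟨{α, β}, by simp⟩),
    fun h I hI ⟨S, hS⟩ => ?_⟩
  · exact fun hbot => hα (Ideal.span_eq_bot.mp hbot α (by simp))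
  · obtain ⟨a, haS, ha⟩ : ∃ a ∈ S, a ≠ 0 := by
      by_contra! hS0
      exact hI (by rw [← hS, Ideal.span_eq_bot]; exact hS0)
    rw [← hS, ← Set.insert_eq_of_mem (Finset.mem_coe.mpr haS)]
    exact h.isUnit_coeIdeal_span_insert S ha

end FractionalIdeal

theorem PairInvertible.of_retraction {R S : Type*} [CommRing R] [CommRing S] (i : S →+* R)
    (r : R →+* S) (hri : ∀ x, r (i x) = x) (h : PairInvertible R) : PairInvertible S := by
  intro α β hα
  have hiα : i α ≠ 0 := fun h0 => hα (by rw [← hri α, h0, map_zero])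
  obtain ⟨s, t, u, v, h1, h2, h3⟩ := h (i α) (i β) hiα
  refine ⟨r s, r t, r u, r v, ?_, ?_, ?_⟩
  · simpa using congrArg r h1
  · simpa [hri] using congrArg r h2
  · simpa [hri] using congrArg r h3

section Subring

variable {T : Type*} [CommRing T]

theorem pairInvertible_subring_iff (S : Subring T) :
    PairInvertible S ↔ ∀ α ∈ S, ∀ β ∈ S, α ≠ 0 →
      ∃ s ∈ S, ∃ t ∈ S, ∃ u ∈ S, ∃ v ∈ S, s + v = 1 ∧ s * β = t * α ∧ u * β = v * α := by
  constructor
  · intro h α hα β hβ hα0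
    obtain ⟨s, t, u, v, h1, h2, h3⟩ := h ⟨α, hα⟩ ⟨β, hβ⟩ (by simpa [Subtype.ext_iff] using hα0)
    exact ⟨s, s.2, t, t.2, u, u.2, v, v.2, by simpa [Subtype.ext_iff] using h1,
      by simpa [Subtype.ext_iff] using h2, by simpa [Subtype.ext_iff] using h3⟩
  · intro h α β hα0
    obtain ⟨s, hs, t, ht, u, hu, v, hv, h1, h2, h3⟩ :=
      h α α.2 β β.2 fun h0 => hα0 (Subtype.ext h0)
    exact ⟨⟨s, hs⟩, ⟨t, ht⟩, ⟨u, hu⟩, ⟨v, hv⟩, by simpa [Subtype.ext_iff] using h1,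
      by simpa [Subtype.ext_iff] using h2, by simpa [Subtype.ext_iff] using h3⟩

theorem PairInvertible.exists_of_ideal_le [IsDomain T] {S : Subring T} {M : Ideal T}
    (hM0 : M ≠ ⊥) (hMS : (M : Set T) ⊆ S) (h : PairInvertible S) (α β : T) (hα : α ≠ 0) :
    ∃ s ∈ S, ∃ t ∈ S, ∃ u ∈ S, ∃ v ∈ S, s + v = 1 ∧ s * β = t * α ∧ u * β = v * α := by
  obtain ⟨m, hm, hm0⟩ := Submodule.exists_mem_ne_zero_of_ne_bot hM0
  obtain ⟨s, hs, t, ht, u, hu, v, hv, h1, h2, h3⟩ := (pairInvertible_subring_iff S).mp h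
    (m * α) (hMS (M.mul_mem_right α hm)) (m * β) (hMS (M.mul_mem_right β hm)) (mul_ne_zero hm0 hα)
  refine ⟨s, hs, t, ht, u, hu, v, hv, h1, mul_left_cancel₀ hm0 ?_, mul_left_cancel₀ hm0 ?_⟩
  · linear_combination h2
  · linear_combination h3

theorem PairInvertible.of_ideal_le [IsDomain T] {S : Subring T} {M : Ideal T}
    (hM0 : M ≠ ⊥) (hMS : (M : Set T) ⊆ S) (h : PairInvertible S) : PairInvertible T :=
  fun α β hα =>
    let ⟨s, _, t, _, u, _, v, _, h⟩ := h.exists_of_ideal_le hM0 hMS α β hα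
    ⟨s, t, u, v, h⟩

end Subring

namespace DirectSumDecomp

variable {T : Type*} [CommRing T] {L : Subring T} {M : Ideal T} (hLM : DirectSumDecomp L M)

noncomputable def quotientEquiv : L ≃+* T ⧸ M :=
  RingEquiv.ofBijective ((Ideal.Quotient.mk M).comp L.subtype)
    ⟨(injective_iff_map_eq_zero _).mpr fun l hl =>
      Subtype.ext (hLM.2 l l.2 (Ideal.Quotient.eq_zero_iff_mem.mp hl)),
    fun x => by
      obtain ⟨t, rfl⟩ := Ideal.Quotient.mk_surjective x
      obtain ⟨l, hl, m, hm, rfl⟩ := hLM.1 t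
      exact ⟨⟨l, hl⟩, (Ideal.Quotient.mk_eq_mk_iff_sub_mem _ _).mpr (by simpa using hm)⟩⟩

noncomputable def proj : T →+* T :=
  L.subtype.comp (hLM.quotientEquiv.symm.toRingHom.comp (Ideal.Quotient.mk M))

theorem proj_mem (t : T) : hLM.proj t ∈ L :=
  (hLM.quotientEquiv.symm (Ideal.Quotient.mk M t)).2

theorem proj_apply_of_mem {l : T} (hl : l ∈ L) : hLM.proj l = l :=
  congrArg Subtype.val (hLM.quotientEquiv.symm_apply_apply ⟨l, hl⟩)

theorem proj_eq_zero_of_mem {m : T} (hm : m ∈ M) : hLM.proj m = 0 := by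
  simp [proj, Ideal.Quotient.eq_zero_iff_mem.mpr hm]

theorem sub_proj_mem (t : T) : t - hLM.proj t ∈ M := by
  rw [← Ideal.Quotient.mk_eq_mk_iff_sub_mem]
  exact (hLM.quotientEquiv.apply_symm_apply (Ideal.Quotient.mk M t)).symm

theorem mem_ringR_iff {K : Subring T} (hKL : K ≤ L) {t : T} :
    t ∈ ringR K M ↔ hLM.proj t ∈ K := by
  constructor
  · rintro ⟨k, hk, m, hm, rfl⟩
    rwa [map_add, hLM.proj_apply_of_mem (hKL hk), hLM.proj_eq_zero_of_mem hm, add_zero]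
  · exact fun h => ⟨hLM.proj t, h, t - hLM.proj t, hLM.sub_proj_mem t, by ring⟩

end DirectSumDecomp

section DPlusM

variable {T : Type*} [CommRing T] {L : Subring T} {M : Ideal T} {K : Subring T}

theorem ideal_subset_ringR : (M : Set T) ⊆ ringR K M :=
  fun m hm => ⟨0, K.zero_mem, m, hm, (zero_add m).symm⟩

theorem PairInvertible.of_ringR [IsDomain T] (hLM : DirectSumDecomp L M) (hKL : K ≤ L)
    (h : PairInvertible (ringR K M)) : PairInvertible K :=
  h.of_retraction (Subring.inclusion (K_le_ringR K M))
    ((hLM.proj.comp (ringR K M).subtype).codRestrict K fun x => (hLM.mem_ringR_iff hKL).mp x.2)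
    fun k => Subtype.ext (hLM.proj_apply_of_mem (hKL k.2))

theorem isFracOf_of_pairInvertible_ringR [IsDomain T] (hM0 : M ≠ ⊥) (hLM : DirectSumDecomp L M)
    (hKL : K ≤ L) (h : PairInvertible (ringR K M)) : IsFracOf K L := by
  intro l hl
  obtain ⟨s, hs, t, ht, u, hu, v, hv, h1, h2, h3⟩ :=
    h.exists_of_ideal_le hM0 ideal_subset_ringR 1 l one_ne_zero
  simp only [hLM.mem_ringR_iff hKL] at hs ht hu hv
  have e1 := congrArg hLM.proj h1
  have e2 := congrArg hLM.proj h2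
  have e3 := congrArg hLM.proj h3
  simp only [map_add, map_mul, map_one, mul_one, hLM.proj_apply_of_mem hl] at e1 e2 e3
  rcases eq_or_ne (hLM.proj u) 0 with hu0 | hu0
  · refine ⟨l, ?_, 1, K.one_mem, one_ne_zero, mul_one l⟩
    have hv0 : hLM.proj v = 0 := by rw [← e3, hu0, zero_mul]
    have hs1 : hLM.proj s = 1 := by rw [← e1, hv0, add_zero]
    rwa [← e2, hs1, one_mul] at ht
  · exact ⟨_, hv, _, hu, hu0, by rw [mul_comm, e3]⟩

theorem IsFracOf.exists_add_mul_eq_one [IsDomain T] (hfrac : IsFracOf K L)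
    (hK : PairInvertible K) {η : T} (hη : η ∈ L) :
    ∃ a ∈ K, ∃ b ∈ K, a + b * η = 1 ∧ a * η ∈ K ∧ b * η ∈ K := by
  obtain ⟨c, hc, d, hd, hd0, hcd⟩ := hfrac η hη
  obtain ⟨s, hs, t, ht, u, hu, v, hv, h1, h2, h3⟩ :=
    (pairInvertible_subring_iff K).mp hK d hd c hc hd0
  have hsη : s * η = t := mul_right_cancel₀ hd0 (by linear_combination h2 + s * hcd)
  have huη : u * η = v := mul_right_cancel₀ hd0 (by linear_combination h3 + u * hcd)
  exact ⟨s, hs, u, hu, by rw [huη, h1], hsη ▸ ht, huη ▸ hv⟩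

/-- With `π = hLM.proj`, `l = (π s)⁻¹` and `a + b η = 1` for `η = π t * l`, the inverse `(x, y)`
of `(α, β)` in `T` is replaced by `((a l - m) x, b l x - m y)`, where `m = a l s + b l t - 1 ∈ M`
restores the sum `1`; the four products then have `L`-components `a`, `a η`, `b`, `b η`, all in
`K`. -/
theorem exists_ringR_of_proj_ne_zero [IsDomain T] (hL : IsFieldSub L) (hLM : DirectSumDecomp L M)
    (hKL : K ≤ L) (hfrac : IsFracOf K L) (hK : PairInvertible K) {α β s t u v : T}
    (h1 : s + v = 1) (h2 : s * β = t * α) (h3 : u * β = v * α) (hs : hLM.proj s ≠ 0) :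
    ∃ s' ∈ ringR K M, ∃ t' ∈ ringR K M, ∃ u' ∈ ringR K M, ∃ v' ∈ ringR K M,
      s' + v' = 1 ∧ s' * β = t' * α ∧ u' * β = v' * α := by
  obtain ⟨l, hl, hsl⟩ := hL _ (hLM.proj_mem s) hs
  obtain ⟨a, ha, b, hb, hab, haη, hbη⟩ :=
    hfrac.exists_add_mul_eq_one hK (L.mul_mem (hLM.proj_mem t) hl)
  set m := a * l * s + b * l * t - 1
  have hm : hLM.proj m = 0 := by
    simp only [m, map_sub, map_add, map_mul, map_one, hLM.proj_apply_of_mem hl,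
      hLM.proj_apply_of_mem (hKL ha), hLM.proj_apply_of_mem (hKL hb)]
    linear_combination hab + a * hsl
  have proj_eq : ∀ {c : T}, c ∈ K → ∀ x y, hLM.proj (c * l * x - m * y) = c * (hLM.proj x * l) :=
    fun hc x y => by
      simp only [map_sub, map_mul, hm, hLM.proj_apply_of_mem hl, hLM.proj_apply_of_mem (hKL hc)]
      ring
  simp only [hLM.mem_ringR_iff hKL]
  refine ⟨a * l * s - m * s, ?_, a * l * t - m * t, ?_, b * l * s - m * u, ?_,
    b * l * t - m * v, ?_, ?_, ?_, ?_⟩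
  · rwa [proj_eq ha, hsl, mul_one]
  · rwa [proj_eq ha]
  · rwa [proj_eq hb, hsl, mul_one]
  · rwa [proj_eq hb]
  · linear_combination (-m) * h1
  · linear_combination (a * l - m) * h2
  · linear_combination b * l * h2 - m * h3

theorem pairInvertible_ringR [IsDomain T] (hL : IsFieldSub L) (hLM : DirectSumDecomp L M)
    (hKL : K ≤ L) (hT : PairInvertible T) (hfrac : IsFracOf K L) (hK : PairInvertible K) :
    PairInvertible (ringR K M) := by
  rw [pairInvertible_subring_iff]
  intro α _ β _ hα
  obtain ⟨s, t, u, v, h1, h2, h3⟩ := hT α β hα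
  rcases ne_or_eq (hLM.proj s) 0 with hs | hs
  · exact exists_ringR_of_proj_ne_zero hL hLM hKL hfrac hK h1 h2 h3 hs
  · have hv : hLM.proj v = 1 := by simpa [hs] using congrArg hLM.proj h1
    obtain ⟨v', hv', u', hu', t', ht', s', hs', g1, g3, g2⟩ :=
      exists_ringR_of_proj_ne_zero hL hLM hKL hfrac hK (by rwa [add_comm]) h3.symm h2.symm
        (by rw [hv]; exact one_ne_zero)
    exact ⟨s', hs', t', ht', u', hu', v', hv', by rwa [add_comm], g2.symm, g3.symm⟩

end DPlusM

theorem stmt_11_general {T : Type*} [CommRing T] [IsDomain T]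
    (L : Subring T) (M : Ideal T) (K : Subring T)
    (hL : IsFieldSub L) (hM0 : M ≠ ⊥)
    (hLM : DirectSumDecomp L M) (hKL : K ≤ L) :
    IsPruferDomain ↥(ringR K M) ↔
      (IsPruferDomain T ∧ IsFracOf K L ∧ IsPruferDomain ↥K) := by
  simp only [isPruferDomain_iff_pairInvertible]
  constructor
  · intro hR
    exact ⟨hR.of_ideal_le hM0 ideal_subset_ringR,
      isFracOf_of_pairInvertible_ringR hM0 hLM hKL hR, hR.of_ringR hLM hKL⟩
  · rintro ⟨hT, hfrac, hK⟩
    exact pairInvertible_ringR hL hLM hKL hT hfrac hK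

theorem stmt_11 {T : Type*} [CommRing T] [IsDomain T]
    (L : Subring T) (M : Ideal T) (K : Subring T)
    (hL : IsFieldSub L) (hM : M.IsMaximal) (hM0 : M ≠ ⊥)
    (hLM : DirectSumDecomp L M) (hKL : K ≤ L) (hKne : K ≠ L) :
    IsPruferDomain ↥(ringR K M) ↔
      (IsPruferDomain T ∧ IsFracOf K L ∧ IsPruferDomain ↥K) :=
  stmt_11_general L M K hL hM0 hLM hKL
end

section
/- With T = L + M, R = K + M as above, R is a Bézout domain if and only if T is a Bézout domain, L is the fraction field of K, and K is a Bézout domain. -/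
section Aux
set_option linter.unusedSectionVars false
set_option linter.unnecessarySimpa false

variable {T : Type*} [CommRing T] [IsDomain T] {L : Subring T} {M : Ideal T} {K : Subring T}

noncomputable def proj (hLM : DirectSumDecomp L M) (t : T) : T := (hLM.1 t).choose

lemma proj_mem (hLM : DirectSumDecomp L M) (t : T) : proj hLM t ∈ L := (hLM.1 t).choose_spec.1

lemma sub_proj_mem (hLM : DirectSumDecomp L M) (t : T) : t - proj hLM t ∈ M := by
  obtain ⟨m, hm, heq⟩ := (hLM.1 t).choose_spec.2
  show t - (hLM.1 t).choose ∈ M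
  have h : t - (hLM.1 t).choose = m := by linear_combination heq
  rwa [h]

lemma proj_eq (hLM : DirectSumDecomp L M) {t l : T} (hl : l ∈ L) (hm : t - l ∈ M) :
    proj hLM t = l := by
  have h3 : proj hLM t - l ∈ M := by
    have h : proj hLM t - l = (t - l) - (t - proj hLM t) := by ring
    rw [h]; exact M.sub_mem hm (sub_proj_mem hLM t)
  exact sub_eq_zero.mp (hLM.2 _ (L.sub_mem (proj_mem hLM t) hl) h3)

lemma proj_of_mem_L (hLM : DirectSumDecomp L M) {l : T} (hl : l ∈ L) : proj hLM l = l :=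
  proj_eq hLM hl (by simpa using M.zero_mem)

lemma proj_mul (hLM : DirectSumDecomp L M) (t s : T) :
    proj hLM (t * s) = proj hLM t * proj hLM s := by
  refine proj_eq hLM (L.mul_mem (proj_mem hLM t) (proj_mem hLM s)) ?_
  have h : t * s - proj hLM t * proj hLM s
      = (t - proj hLM t) * s + proj hLM t * (s - proj hLM s) := by ring
  rw [h]
  exact M.add_mem (M.mul_mem_right s (sub_proj_mem hLM t))
    (M.mul_mem_left _ (sub_proj_mem hLM s))

lemma proj_add (hLM : DirectSumDecomp L M) (t s : T) :
    proj hLM (t + s) = proj hLM t + proj hLM s := by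
  refine proj_eq hLM (L.add_mem (proj_mem hLM t) (proj_mem hLM s)) ?_
  have h : t + s - (proj hLM t + proj hLM s) = (t - proj hLM t) + (s - proj hLM s) := by ring
  rw [h]; exact M.add_mem (sub_proj_mem hLM t) (sub_proj_mem hLM s)

lemma mem_ringR_iff (hLM : DirectSumDecomp L M) (hKL : K ≤ L) {t : T} :
    t ∈ ringR K M ↔ proj hLM t ∈ K := by
  constructor
  · rintro ⟨k, hk, m, hm, rfl⟩
    have h : proj hLM (k + m) = k := proj_eq hLM (hKL hk) (by simpa using hm)
    rwa [h]
  · intro h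
    exact ⟨proj hLM t, h, t - proj hLM t, sub_proj_mem hLM t, by ring⟩

lemma M_mem_ringR {m : T} (hm : m ∈ M) : m ∈ ringR K M :=
  ⟨0, K.zero_mem, m, hm, by ring⟩

lemma one_not_mem_M (hLM : DirectSumDecomp L M) : (1 : T) ∉ M :=
  fun h => one_ne_zero (hLM.2 1 L.one_mem h)

end Aux

section Key
set_option linter.unusedSectionVars false
set_option maxHeartbeats 1000000

variable {T : Type*} [CommRing T] [IsDomain T] {L : Subring T} {M : Ideal T} {K : Subring T}

lemma key (hL : IsFieldSub L) (hLM : DirectSumDecomp L M) (hKL : K ≤ L)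
    (hFr : IsFracOf K L) (hK : IsBezout ↥K)
    (x y : ↥(ringR K M)) (t₂ m₀ lam m1 u v : T)
    (hm₀ : m₀ ∈ M) (hm1 : m1 ∈ M) (hlam : lam ∈ L)
    (hx : (x : T) = t₂ * (1 + m₀)) (hy : (y : T) = t₂ * (lam + m1))
    (huv : (1 + m₀) * u + (lam + m1) * v = 1) :
    (Ideal.span {x, y}).IsPrincipal := by
  obtain ⟨a, ha, b, hb, hb0, hab⟩ := hFr lam hlam
  -- Bezout in K for the pair (a, b)
  obtain ⟨g, hg⟩ := (IsBezout.iff_span_pair_isPrincipal.mp hK ⟨a, ha⟩ ⟨b, hb⟩).principal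
  have hg' : Ideal.span {(⟨a, ha⟩ : ↥K), ⟨b, hb⟩} = Ideal.span {g} := hg
  have hamem : (⟨a, ha⟩ : ↥K) ∈ Ideal.span {g} := by
    rw [← hg']; exact Ideal.subset_span (Set.mem_insert _ _)
  have hbmem : (⟨b, hb⟩ : ↥K) ∈ Ideal.span {g} := by
    rw [← hg']; exact Ideal.subset_span (Set.mem_insert_of_mem _ rfl)
  have hgmem : g ∈ Ideal.span {(⟨a, ha⟩ : ↥K), ⟨b, hb⟩} := by
    rw [hg']; exact Ideal.subset_span rfl
  obtain ⟨ka, hka⟩ := Ideal.mem_span_singleton.mp hamem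
  obtain ⟨kb, hkb⟩ := Ideal.mem_span_singleton.mp hbmem
  obtain ⟨p, q, hpq⟩ := Ideal.mem_span_pair.mp hgmem
  -- pass to T
  have hKA : a = (g : T) * (ka : T) := congrArg (Subtype.val) hka
  have hKB : b = (g : T) * (kb : T) := congrArg (Subtype.val) hkb
  have hPQ : (p : T) * a + (q : T) * b = (g : T) := congrArg (Subtype.val) hpq
  have hG0 : (g : T) ≠ 0 := fun h => hb0 (by rw [hKB, h, zero_mul])
  obtain ⟨wg, hwgL, hwg⟩ := hL (g : T) (hKL g.2) hG0
  obtain ⟨wb, hwbL, hwb⟩ := hL b (hKL hb) hb0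
  have hlamkb : lam * (kb : T) = (ka : T) := by
    have h1 : (g : T) * (lam * kb) = (g : T) * ka := by
      rw [← hKA]; linear_combination hab - lam * hKB
    exact mul_left_cancel₀ hG0 h1
  set t' := t₂ * ((g : T) * wb) with ht'def
  have h3 : (x : T) * u + (y : T) * v = t₂ := by
    rw [hx, hy]; linear_combination t₂ * huv
  set mm := (p : T) * m1 + (q : T) * m₀ with hmmdef
  have hmm : mm ∈ M := M.add_mem (M.mul_mem_left _ hm1) (M.mul_mem_left _ hm₀)
  set c1 := (q : T) - u * mm with hc1def
  set c2 := (p : T) - v * mm with hc2def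
  have hc1 : c1 ∈ ringR K M :=
    ⟨q, q.2, -(u * mm), M.neg_mem (M.mul_mem_left u hmm), by rw [hc1def]; ring⟩
  have hc2 : c2 ∈ ringR K M :=
    ⟨p, p.2, -(v * mm), M.neg_mem (M.mul_mem_left v hmm), by rw [hc2def]; ring⟩
  have ht' : t' = (x : T) * c1 + (y : T) * c2 := by
    rw [ht'def, hc1def, hc2def, hx, hy, hmmdef]
    linear_combination t₂ * ((p : T) * m1 + (q : T) * m₀) * huv +
      t₂ * ((p : T) * lam + (q : T)) * hwb - t₂ * wb * hPQ - t₂ * wb * (p : T) * hab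
  have ht'mem : t' ∈ ringR K M := by
    rw [ht']
    exact Subring.add_mem _ (Subring.mul_mem _ x.2 hc1) (Subring.mul_mem _ y.2 hc2)
  set d : ↥(ringR K M) := ⟨t', ht'mem⟩ with hddef
  -- x = d * (kb * (1 + m₀))
  have hr1mem : (kb : T) * (1 + m₀) ∈ ringR K M :=
    ⟨kb, kb.2, (kb : T) * m₀, M.mul_mem_left _ hm₀, by ring⟩
  have hr2mem : (kb : T) * (lam + m1) ∈ ringR K M :=
    ⟨ka, ka.2, (kb : T) * m1, M.mul_mem_left _ hm1, by linear_combination hlamkb⟩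
  have hxd : x = d * ⟨(kb : T) * (1 + m₀), hr1mem⟩ := by
    apply Subtype.ext
    show (x : T) = t' * ((kb : T) * (1 + m₀))
    rw [hx, ht'def]
    linear_combination t₂ * (1 + m₀) * wb * hKB - t₂ * (1 + m₀) * hwb
  have hyd : y = d * ⟨(kb : T) * (lam + m1), hr2mem⟩ := by
    apply Subtype.ext
    show (y : T) = t' * ((kb : T) * (lam + m1))
    rw [hy, ht'def]
    linear_combination t₂ * (lam + m1) * wb * hKB - t₂ * (lam + m1) * hwb
  refine ⟨⟨d, le_antisymm ?_ ?_⟩⟩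
  · rw [Ideal.span_le]
    rintro z hz
    simp only [Set.mem_insert_iff, Set.mem_singleton_iff] at hz
    rcases hz with rfl | rfl
    · exact Ideal.mem_span_singleton.mpr ⟨_, hxd⟩
    · exact Ideal.mem_span_singleton.mpr ⟨_, hyd⟩
  · rw [Submodule.span_le]
    rintro z hz
    simp only [Set.mem_singleton_iff] at hz
    subst hz
    refine Ideal.mem_span_pair.mpr ⟨⟨c1, hc1⟩, ⟨c2, hc2⟩, ?_⟩
    apply Subtype.ext
    show c1 * (x : T) + c2 * (y : T) = t'
    rw [ht']; ring
end Key

section Main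
set_option linter.unusedSectionVars false
set_option maxHeartbeats 1000000

variable {T : Type*} [CommRing T] [IsDomain T] {L : Subring T} {M : Ideal T} {K : Subring T}

lemma main_case (hL : IsFieldSub L) (hLM : DirectSumDecomp L M) (hKL : K ≤ L)
    (hFr : IsFracOf K L) (hK : IsBezout ↥K)
    (x y : ↥(ringR K M)) (t x' y' u v : T)
    (hx' : (x : T) = t * x') (hy' : (y : T) = t * y')
    (huv : x' * u + y' * v = 1) (hxM : x' ∉ M) :
    (Ideal.span {x, y}).IsPrincipal := by
  set l' := proj hLM x' with hl'def
  have hl'0 : l' ≠ 0 := by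
    intro h
    apply hxM
    have h2 := sub_proj_mem hLM x'
    rw [← hl'def, h, sub_zero] at h2
    exact h2
  obtain ⟨w, hwL, hw⟩ := hL l' (proj_mem hLM x') hl'0
  have hm₀ : x' * w - 1 ∈ M := by
    have h1 : proj hLM (x' * w) = 1 := by
      rw [proj_mul hLM, proj_of_mem_L hLM hwL, ← hl'def, hw]
    have h2 := sub_proj_mem hLM (x' * w)
    rwa [h1] at h2
  refine key hL hLM hKL hFr hK x y (t * l') (x' * w - 1) (proj hLM (y' * w))
    (y' * w - proj hLM (y' * w)) (u * l') (v * l') hm₀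
    (sub_proj_mem hLM (y' * w)) (proj_mem hLM (y' * w)) ?_ ?_ ?_
  · rw [hx']; linear_combination -(t * x' * hw)
  · rw [hy']; linear_combination -(t * y' * hw)
  · linear_combination (w * l') * huv + hw

lemma bezoutR (hL : IsFieldSub L) (hLM : DirectSumDecomp L M) (hKL : K ≤ L)
    (hT : IsBezout T) (hFr : IsFracOf K L) (hK : IsBezout ↥K) :
    IsBezout ↥(ringR K M) := by
  rw [IsBezout.iff_span_pair_isPrincipal]
  intro x y
  obtain ⟨t, ht⟩ := (IsBezout.iff_span_pair_isPrincipal.mp hT (x : T) (y : T)).principal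
  have ht' : Ideal.span {(x : T), (y : T)} = Ideal.span {t} := ht
  have hxm : (x : T) ∈ Ideal.span {t} := by
    rw [← ht']; exact Ideal.subset_span (Set.mem_insert _ _)
  have hym : (y : T) ∈ Ideal.span {t} := by
    rw [← ht']; exact Ideal.subset_span (Set.mem_insert_of_mem _ rfl)
  have htm : t ∈ Ideal.span {(x : T), (y : T)} := by
    rw [ht']; exact Ideal.mem_span_singleton_self t
  obtain ⟨x', hx'⟩ := Ideal.mem_span_singleton.mp hxm
  obtain ⟨y', hy'⟩ := Ideal.mem_span_singleton.mp hym
  obtain ⟨u, v, huv⟩ := Ideal.mem_span_pair.mp htm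
  by_cases ht0 : t = 0
  · have hx0 : x = 0 := by
      apply Subtype.ext
      show (x : T) = 0
      rw [hx', ht0, zero_mul]
    have hy0 : y = 0 := by
      apply Subtype.ext
      show (y : T) = 0
      rw [hy', ht0, zero_mul]
    subst hx0; subst hy0
    exact ⟨⟨0, by rw [Set.pair_eq_singleton]⟩⟩
  · have huv1 : x' * u + y' * v = 1 := by
      apply mul_left_cancel₀ ht0
      linear_combination huv - u * hx' - v * hy'
    have hnot : x' ∉ M ∨ y' ∉ M := by
      by_contra h
      push_neg at h
      exact one_not_mem_M hLM (by
        rw [← huv1]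
        exact M.add_mem (M.mul_mem_right u h.1) (M.mul_mem_right v h.2))
    rcases hnot with hxM | hyM
    · exact main_case hL hLM hKL hFr hK x y t x' y' u v hx' hy' huv1 hxM
    · rw [Ideal.span_pair_comm]
      exact main_case hL hLM hKL hFr hK y x t y' x' v u hy' hx'
        (by linear_combination huv1) hyM

lemma frac_of_bezout (hLM : DirectSumDecomp L M) (hKL : K ≤ L) (hM0 : M ≠ ⊥)
    (hR : IsBezout ↥(ringR K M)) : IsFracOf K L := by
  intro l hl
  by_cases hl0 : l = 0
  · exact ⟨0, K.zero_mem, 1, K.one_mem, one_ne_zero, by rw [hl0, zero_mul]⟩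
  obtain ⟨m, hmM, hm0⟩ := Submodule.exists_mem_ne_zero_of_ne_bot hM0
  set xm : ↥(ringR K M) := ⟨m, M_mem_ringR hmM⟩ with hxmdef
  set xlm : ↥(ringR K M) := ⟨l * m, M_mem_ringR (M.mul_mem_left l hmM)⟩ with hxlmdef
  obtain ⟨dd, hdd⟩ := (IsBezout.iff_span_pair_isPrincipal.mp hR xm xlm).principal
  have hdd' : Ideal.span {xm, xlm} = Ideal.span {dd} := hdd
  have h1m : xm ∈ Ideal.span {dd} := by
    rw [← hdd']; exact Ideal.subset_span (Set.mem_insert _ _)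
  have h2m : xlm ∈ Ideal.span {dd} := by
    rw [← hdd']; exact Ideal.subset_span (Set.mem_insert_of_mem _ rfl)
  have h3m : dd ∈ Ideal.span {xm, xlm} := by
    rw [hdd']; exact Ideal.mem_span_singleton_self dd
  obtain ⟨r1, hr1⟩ := Ideal.mem_span_singleton.mp h1m
  obtain ⟨r2, hr2⟩ := Ideal.mem_span_singleton.mp h2m
  obtain ⟨s, s', hss⟩ := Ideal.mem_span_pair.mp h3m
  have H1 : m = (dd : T) * r1 := congrArg Subtype.val hr1
  have H2 : l * m = (dd : T) * r2 := congrArg Subtype.val hr2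
  have H3 : (s : T) * m + (s' : T) * (l * m) = (dd : T) := congrArg Subtype.val hss
  have hD0 : (dd : T) ≠ 0 := fun h => hm0 (by rw [H1, h, zero_mul])
  have hone : ((s : T) + (s' : T) * l) * (r1 : T) = 1 := by
    apply mul_left_cancel₀ hm0
    linear_combination (r1 : T) * H3 - H1
  have hlr : l * (r1 : T) = (r2 : T) := by
    apply mul_left_cancel₀ hD0
    linear_combination H2 - l * H1
  have hbK : proj hLM (r1 : T) ∈ K := (mem_ringR_iff hLM hKL).mp r1.2
  have haK : proj hLM (r2 : T) ∈ K := (mem_ringR_iff hLM hKL).mp r2.2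
  have hlb : l * proj hLM (r1 : T) = proj hLM (r2 : T) := by
    have h := proj_mul hLM l (r1 : T)
    rw [hlr, proj_of_mem_L hLM hl] at h
    exact h.symm
  have hb0 : proj hLM (r1 : T) ≠ 0 := by
    intro h
    have h1 : proj hLM (((s : T) + (s' : T) * l) * (r1 : T)) = proj hLM 1 := by rw [hone]
    rw [proj_mul hLM, h, mul_zero, proj_of_mem_L hLM L.one_mem] at h1
    exact one_ne_zero h1.symm
  exact ⟨proj hLM (r2 : T), haK, proj hLM (r1 : T), hbK, hb0, hlb⟩

lemma bezoutK_of (hLM : DirectSumDecomp L M) (hKL : K ≤ L)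
    (hR : IsBezout ↥(ringR K M)) : IsBezout ↥K := by
  haveI := hR
  refine Function.Surjective.isBezout (R := ↥(ringR K M))
    { toFun := fun r => ⟨proj hLM (r : T), (mem_ringR_iff hLM hKL).mp r.2⟩
      map_one' := Subtype.ext (proj_of_mem_L hLM L.one_mem)
      map_mul' := fun r s => Subtype.ext (proj_mul hLM (r : T) (s : T))
      map_zero' := Subtype.ext (proj_of_mem_L hLM L.zero_mem)
      map_add' := fun r s => Subtype.ext (proj_add hLM (r : T) (s : T)) } ?_
  intro k
  exact ⟨⟨(k : T), K_le_ringR K M k.2⟩, Subtype.ext (proj_of_mem_L hLM (hKL k.2))⟩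

lemma bezoutT_of (hL : IsFieldSub L) (hLM : DirectSumDecomp L M) (hKL : K ≤ L)
    (hFr : IsFracOf K L) (hR : IsBezout ↥(ringR K M)) : IsBezout T := by
  rw [IsBezout.iff_span_pair_isPrincipal]
  intro X Y
  obtain ⟨a1, ha1, b1, hb1, hb10, hab1⟩ := hFr (proj hLM X) (proj_mem hLM X)
  obtain ⟨a2, ha2, b2, hb2, hb20, hab2⟩ := hFr (proj hLM Y) (proj_mem hLM Y)
  have hXm : X * b1 ∈ ringR K M :=
    ⟨a1, ha1, (X - proj hLM X) * b1, M.mul_mem_right _ (sub_proj_mem hLM X),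
      by linear_combination hab1⟩
  have hYm : Y * b2 ∈ ringR K M :=
    ⟨a2, ha2, (Y - proj hLM Y) * b2, M.mul_mem_right _ (sub_proj_mem hLM Y),
      by linear_combination hab2⟩
  set x : ↥(ringR K M) := ⟨X * b1, hXm⟩ with hxdef
  set y : ↥(ringR K M) := ⟨Y * b2, hYm⟩ with hydef
  obtain ⟨dd, hdd⟩ := (IsBezout.iff_span_pair_isPrincipal.mp hR x y).principal
  have hdd' : Ideal.span {x, y} = Ideal.span {dd} := hdd
  have h1m : x ∈ Ideal.span {dd} := by
    rw [← hdd']; exact Ideal.subset_span (Set.mem_insert _ _)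
  have h2m : y ∈ Ideal.span {dd} := by
    rw [← hdd']; exact Ideal.subset_span (Set.mem_insert_of_mem _ rfl)
  have h3m : dd ∈ Ideal.span {x, y} := by
    rw [hdd']; exact Ideal.mem_span_singleton_self dd
  obtain ⟨r1, hr1⟩ := Ideal.mem_span_singleton.mp h1m
  obtain ⟨r2, hr2⟩ := Ideal.mem_span_singleton.mp h2m
  obtain ⟨s, s', hss⟩ := Ideal.mem_span_pair.mp h3m
  have H1 : X * b1 = (dd : T) * r1 := congrArg Subtype.val hr1
  have H2 : Y * b2 = (dd : T) * r2 := congrArg Subtype.val hr2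
  have H3 : (s : T) * (X * b1) + (s' : T) * (Y * b2) = (dd : T) := congrArg Subtype.val hss
  obtain ⟨w1, hw1L, hw1⟩ := hL b1 (hKL hb1) hb10
  obtain ⟨w2, hw2L, hw2⟩ := hL b2 (hKL hb2) hb20
  refine ⟨⟨(dd : T), le_antisymm ?_ ?_⟩⟩
  · rw [Ideal.span_le]
    rintro z hz
    simp only [Set.mem_insert_iff, Set.mem_singleton_iff] at hz
    rcases hz with rfl | rfl
    · exact Ideal.mem_span_singleton.mpr ⟨(r1 : T) * w1, by linear_combination w1 * H1 - z * hw1⟩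
    · exact Ideal.mem_span_singleton.mpr ⟨(r2 : T) * w2, by linear_combination w2 * H2 - z * hw2⟩
  · rw [Submodule.span_le]
    rintro z hz
    simp only [Set.mem_singleton_iff] at hz
    subst hz
    exact Ideal.mem_span_pair.mpr ⟨(s : T) * b1, (s' : T) * b2, by linear_combination H3⟩

end Main



theorem stmt_14 {T : Type*} [CommRing T] [IsDomain T]
    (L : Subring T) (M : Ideal T) (K : Subring T)
    (hL : IsFieldSub L) (hM : M.IsMaximal) (hM0 : M ≠ ⊥)
    (hLM : DirectSumDecomp L M) (hKL : K ≤ L) (hKne : K ≠ L) :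
    IsBezout ↥(ringR K M) ↔ (IsBezout T ∧ IsFracOf K L ∧ IsBezout ↥K) := by
  constructor
  · intro hR
    have hFr := frac_of_bezout hLM hKL hM0 hR
    exact ⟨bezoutT_of hL hLM hKL hFr hR, hFr, bezoutK_of hLM hKL hR⟩
  · rintro ⟨hT, hFr, hK⟩
    exact bezoutR hL hLM hKL hT hFr hK
end

section
/- Let K be an integral domain properly contained in a field L. The composite K + XL[X] is a Bézout domain if and only if L is the fraction field of K and K is a Bézout domain. -/
/-!
Let `f = D F`, `g = D G` with `D` a gcd of `f, g` in `L[X]` and `P F + Q G = 1`. Multiplying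
`P` and `Q` by elements of `X L[X]` shows that `(f, g)` contains `D · X L[X]`, so the ideal is
governed by the `K`-module `K F(0) + K G(0) ⊆ L`. When `K` is Bézout with fraction field `L` this
module is some `K μ`, and then `(f, g) = (μ D)`. Conversely, `p ↦ p(0)` maps `K + X L[X]` onto `K`,
and a generator of `(X, l X)` is `u X` with `u⁻¹` and `l u⁻¹` in `K`.
-/

open Polynomial

theorem IsBezout.of_forall_exists_dvd_mem_span {R : Type*} [CommRing R]
    (h : ∀ x y : R, ∃ d, d ∣ x ∧ d ∣ y ∧ d ∈ Ideal.span {x, y}) : IsBezout R := by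
  refine IsBezout.iff_span_pair_isPrincipal.mpr fun x y => ?_
  obtain ⟨d, hx, hy, hd⟩ := h x y
  refine ⟨d, le_antisymm ?_ ((Ideal.span_singleton_le_iff_mem _).mpr hd)⟩
  rw [Ideal.span_le, Set.insert_subset_iff, Set.singleton_subset_iff]
  exact ⟨Ideal.mem_span_singleton.mpr hx, Ideal.mem_span_singleton.mpr hy⟩

section Composite

variable {L : Type*} [Field L] {K : Subring L}

namespace FracOfField

theorem exists_common_denom (hfrac : FracOfField K) (a b : L) :
    ∃ s ∈ K, s ≠ 0 ∧ a * s ∈ K ∧ b * s ∈ K := by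
  obtain ⟨a', ha', s, hs, hs0, has⟩ := hfrac a
  obtain ⟨b', hb', t, ht, ht0, hbt⟩ := hfrac b
  refine ⟨s * t, K.mul_mem hs ht, mul_ne_zero hs0 ht0, ?_, ?_⟩
  · rw [← mul_assoc, has]
    exact K.mul_mem ha' ht
  · rw [mul_left_comm, hbt]
    exact K.mul_mem hs hb'

theorem exists_span_pair_eq [IsBezout K] (hfrac : FracOfField K) (a b : L) :
    ∃ μ : L, (∃ x ∈ K, a = μ * x) ∧ (∃ y ∈ K, b = μ * y) ∧
      ∃ α ∈ K, ∃ β ∈ K, α * a + β * b = μ := by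
  obtain ⟨s, hs, hs0, has, hbs⟩ := hfrac.exists_common_denom a b
  set A : K := ⟨a * s, has⟩
  set B : K := ⟨b * s, hbs⟩
  obtain ⟨x, hx⟩ := IsBezout.gcd_dvd_left A B
  obtain ⟨y, hy⟩ := IsBezout.gcd_dvd_right A B
  obtain ⟨α, β, hαβ⟩ := IsBezout.gcd_eq_sum A B
  set c : K := IsBezout.gcd A B
  have hxL : a * s = c * x := congrArg Subtype.val hx
  have hyL : b * s = c * y := congrArg Subtype.val hy
  have hαβL : α * (a * s) + β * (b * s) = c := congrArg Subtype.val hαβ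
  refine ⟨c / s, ⟨x, x.2, ?_⟩, ⟨y, y.2, ?_⟩, α, α.2, β, β.2, ?_⟩
  · field_simp
    linear_combination hxL
  · field_simp
    linear_combination hyL
  · field_simp
    linear_combination hαβL

end FracOfField

theorem mem_composite {p : L[X]} : p ∈ composite K ↔ p.coeff 0 ∈ K :=
  Iff.rfl

theorem C_mem_composite {a : L} : C a ∈ composite K ↔ a ∈ K := by
  rw [mem_composite, coeff_C_zero]

theorem mem_composite_of_coeff_zero_eq_zero {p : L[X]} (hp : p.coeff 0 = 0) :
    p ∈ composite K :=
  mem_composite.mpr (hp ▸ K.zero_mem)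

variable (K) in
noncomputable def compositeConstantCoeff : composite K →+* K :=
  (constantCoeff.comp (composite K).subtype).codRestrict K fun p => p.2

theorem compositeConstantCoeff_surjective : Function.Surjective (compositeConstantCoeff K) :=
  fun a => ⟨⟨C a, C_mem_composite.mpr a.2⟩, Subtype.ext coeff_C_zero⟩

theorem FracOfField.of_isBezout_composite [IsBezout (composite K)] : FracOfField K := by
  intro l
  let x : composite K := ⟨X, mem_composite_of_coeff_zero_eq_zero coeff_X_zero⟩
  let y : composite K := ⟨C l * X, mem_composite_of_coeff_zero_eq_zero (by simp)⟩
  obtain ⟨m, hm⟩ := IsBezout.gcd_dvd_left x y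
  obtain ⟨n, hn⟩ := IsBezout.gcd_dvd_right x y
  obtain ⟨p, q, hpq⟩ := IsBezout.gcd_eq_sum x y
  set G : L[X] := ((IsBezout.gcd x y : composite K) : L[X])
  have hmL : X = G * (m : L[X]) := congrArg Subtype.val hm
  have hnL : C l * X = G * (n : L[X]) := congrArg Subtype.val hn
  have hpqL : (p : L[X]) * X + (q : L[X]) * (C l * X) = G := congrArg Subtype.val hpq
  have hG0 : G.coeff 0 = 0 := by
    rw [← hpqL]
    simp
  obtain ⟨G₁, hG₁⟩ := X_dvd_iff.mpr hG0
  have hG₁m : G₁ * m = 1 :=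
    mul_left_cancel₀ X_ne_zero (by rw [mul_one, ← mul_assoc, ← hG₁, ← hmL])
  have hnm : (n : L[X]) = C l * m :=
    mul_left_cancel₀ X_ne_zero (by linear_combination (-X * n) * hG₁m - m * hnL - (n * m) * hG₁)
  have hm0 : (m : L[X]).coeff 0 ≠ 0 := by
    intro h0
    simpa [mul_coeff_zero, h0] using congrArg (coeff · 0) hG₁m
  refine ⟨(n : L[X]).coeff 0, n.2, (m : L[X]).coeff 0, m.2, hm0, ?_⟩
  rw [hnm, mul_coeff_zero, coeff_C_zero]

theorem exists_composite_gcd [IsBezout K] (hfrac : FracOfField K) (f g : L[X]) :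
    ∃ h : L[X], (∃ u ∈ composite K, f = h * u) ∧ (∃ v ∈ composite K, g = h * v) ∧
      ∃ p ∈ composite K, ∃ q ∈ composite K, p * f + q * g = h := by
  obtain ⟨F, hF⟩ := IsBezout.gcd_dvd_left f g
  obtain ⟨G, hG⟩ := IsBezout.gcd_dvd_right f g
  obtain ⟨P, Q, hPQ⟩ := IsBezout.gcd_eq_sum f g
  set D := IsBezout.gcd f g
  by_cases hD : D = 0
  · exact ⟨0, ⟨0, zero_mem _, by simp [hF, hD]⟩, ⟨0, zero_mem _, by simp [hG, hD]⟩,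
      0, zero_mem _, 0, zero_mem _, by simp⟩
  have hcop : P * F + Q * G = 1 :=
    mul_left_cancel₀ hD (by linear_combination hPQ - P * hF - Q * hG)
  obtain ⟨μ, ⟨x, hx, hFx⟩, ⟨y, hy, hGy⟩, α, hα, β, hβ, hαβ⟩ :=
    hfrac.exists_span_pair_eq (F.coeff 0) (G.coeff 0)
  have hμ : μ ≠ 0 := by
    rintro rfl
    simpa [mul_coeff_zero, hFx, hGy] using congrArg (coeff · 0) hcop
  -- `μ D = α f + β g + D k`, and `D k = (k P) f + (k Q) g` with `k P, k Q ∈ X L[X]`.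
  set k := C μ - C α * F - C β * G
  have hk : k.coeff 0 = 0 := by
    simp only [k, coeff_sub, mul_coeff_zero, coeff_C_zero]
    linear_combination -hαβ
  have hCμ : C μ * C μ⁻¹ = (1 : L[X]) := by rw [← C_mul, mul_inv_cancel₀ hμ, C_1]
  refine ⟨C μ * D, ⟨C μ⁻¹ * F, ?_, ?_⟩, ⟨C μ⁻¹ * G, ?_, ?_⟩,
    C α + k * P, ?_, C β + k * Q, ?_, ?_⟩
  · rw [mem_composite, mul_coeff_zero, coeff_C_zero, hFx, inv_mul_cancel_left₀ hμ]
    exact hx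
  · linear_combination hF - D * F * hCμ
  · rw [mem_composite, mul_coeff_zero, coeff_C_zero, hGy, inv_mul_cancel_left₀ hμ]
    exact hy
  · linear_combination hG - D * G * hCμ
  · simpa [mem_composite, mul_coeff_zero, hk] using hα
  · simpa [mem_composite, mul_coeff_zero, hk] using hβ
  · linear_combination (C α + k * P) * hF + (C β + k * Q) * hG + D * k * hcop

theorem isBezout_composite [IsBezout K] (hfrac : FracOfField K) : IsBezout (composite K) := by
  refine IsBezout.of_forall_exists_dvd_mem_span fun f g => ?_
  obtain ⟨h, ⟨u, hu, hfu⟩, ⟨v, hv, hgv⟩, p, hp, q, hq, hpq⟩ :=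
    exists_composite_gcd hfrac (f : L[X]) g
  have hh : h ∈ composite K := hpq ▸ add_mem (mul_mem hp f.2) (mul_mem hq g.2)
  exact ⟨⟨h, hh⟩, ⟨⟨u, hu⟩, Subtype.ext hfu⟩, ⟨⟨v, hv⟩, Subtype.ext hgv⟩,
    Ideal.mem_span_pair.mpr ⟨⟨p, hp⟩, ⟨q, hq⟩, Subtype.ext hpq⟩⟩

end Composite

theorem stmt_15_general {L : Type*} [Field L] (K : Subring L) :
    IsBezout ↥(composite K) ↔ (FracOfField K ∧ IsBezout ↥K) := by
  constructor
  · intro _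
    exact ⟨FracOfField.of_isBezout_composite, compositeConstantCoeff_surjective.isBezout⟩
  · rintro ⟨hfrac, _⟩
    exact isBezout_composite hfrac

theorem stmt_15 {L : Type*} [Field L] (K : Subring L) (hKne : K ≠ ⊤) :
    IsBezout ↥(composite K) ↔ (FracOfField K ∧ IsBezout ↥K) :=
  stmt_15_general K
end
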